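/- arXiv:1703.00683 — 9 statements merged into one kernel-verified Lean document; each statement's English description precedes it below -/
import Mathlib

section
/- For every history π̄ = v̄₀ a₁ v̄₁ … aₙ v̄ₙ in the powerset game Ḡ and every uₙ ∈ v̄ₙ, there exists a history π = u₀ a₁' u₁ … aₙ' uₙ in the original game G such that uᵢ ∈ v̄ᵢ for all i and aᵢ' ∼ᴬ aᵢ for all i. -/
/-- `Post B S`: positions reachable in one step from `S` using an action in `B`. -/
def Post {V A : Type*} (Ea : A → V → V → Prop) (B : Set A) (S : Set V) : Set V :=
  {v | ∃ s ∈ S, ∃ b ∈ B, Ea b s v}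

/-- The `a`-labelled edge relation of the powerset game: there is an `a`-edge from
`s` to `t` iff `t = Post_{[a]}(s) ∩ [u]` for some `u ∈ Post_{[a]}(s)`. -/
def powEdgeA {V A : Type*} (Ea : A → V → V → Prop) (simV : V → V → Prop)
    (simA : A → A → Prop) (a : A) (s t : Set V) : Prop :=
  ∃ u ∈ Post Ea {b | simA b a} s, t = Post Ea {b | simA b a} s ∩ {w | simV u w}

/-! Every position of `v̄ᵢ₊₁` has an `∼ᴬ aᵢ`-predecessor in `v̄ᵢ`, so a history of the
powerset game can be lifted backwards, one step at a time, from any position of its last set. -/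

theorem powEdgeA_subset_Post {V A : Type*} {Ea : A → V → V → Prop} {simV : V → V → Prop}
    {simA : A → A → Prop} {a : A} {s t : Set V} (h : powEdgeA Ea simV simA a s t) :
    t ⊆ Post Ea {b | simA b a} s := by
  obtain ⟨_, _, rfl⟩ := h
  exact Set.inter_subset_left

theorem exists_path_of_forall_exists_pred {α : Type*} {n : ℕ} (S : Fin (n + 1) → Set α)
    (R : Fin n → α → α → Prop) (hpred : ∀ i : Fin n, ∀ y ∈ S i.succ, ∃ x ∈ S i.castSucc, R i x y)
    {y : α} (hy : y ∈ S (Fin.last n)) :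
    ∃ u : Fin (n + 1) → α, u (Fin.last n) = y ∧ (∀ i, u i ∈ S i) ∧
      ∀ i : Fin n, R i (u i.castSucc) (u i.succ) := by
  induction n generalizing y with
  | zero => exact ⟨fun _ => y, rfl, fun i => Fin.fin_one_eq_zero i ▸ hy, fun i => i.elim0⟩
  | succ n ih =>
    obtain ⟨x, hx, hxy⟩ := hpred (Fin.last n) y hy
    obtain ⟨u, rfl, hu, hR⟩ := ih (fun i => S i.castSucc) (fun i => R i.castSucc)
      (fun i z hz => hpred i.castSucc z (by rwa [Fin.succ_castSucc])) hx
    refine ⟨Fin.snoc u y, Fin.snoc_last _ _, Fin.lastCases ?_ fun i => ?_,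
      Fin.lastCases ?_ fun i => ?_⟩
    · simpa using hy
    · simpa using hu i
    · simpa [Fin.succ_last] using hxy
    · simpa only [Fin.succ_castSucc, Fin.snoc_castSucc] using hR i

theorem powerset_history_lift_general {V A : Type*}
    (Ea : A → V → V → Prop) (simV : V → V → Prop) (simA : A → A → Prop)
    (n : ℕ) (vbar : Fin (n + 1) → Set V) (a : Fin n → A)
    (hhist : ∀ i : Fin n, powEdgeA Ea simV simA (a i) (vbar i.castSucc) (vbar i.succ))
    (un : V) (hun : un ∈ vbar (Fin.last n)) :
    ∃ (u : Fin (n + 1) → V) (a' : Fin n → A),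
      u (Fin.last n) = un ∧
      (∀ i : Fin (n + 1), u i ∈ vbar i) ∧
      (∀ i : Fin n, simA (a' i) (a i)) ∧
      (∀ i : Fin n, Ea (a' i) (u i.castSucc) (u i.succ)) := by
  obtain ⟨u, hlast, hmem, hstep⟩ := exists_path_of_forall_exists_pred vbar
    (fun i x y => ∃ b, simA b (a i) ∧ Ea b x y)
    (fun i _ hy => powEdgeA_subset_Post (hhist i) hy) hun
  choose a' hsim hE using hstep
  exact ⟨u, a', hlast, hmem, hsim, hE⟩

/-- **Lemma (powerset histories lift).**
For every history `v̄₀ a₁ v̄₁ … aₙ v̄ₙ` of the powerset game and every `uₙ ∈ v̄ₙ`,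
there is a history `u₀ a₁' u₁ … aₙ' uₙ` of the original game `G` with `uᵢ ∈ v̄ᵢ`
for all `i` and `aᵢ' ∼ᴬ aᵢ` for all `i`. -/
theorem powerset_history_lift {V A : Type*}
    (Ea : A → V → V → Prop) (simV : V → V → Prop) (simA : A → A → Prop)
    (hV : Equivalence simV) (hA : Equivalence simA)
    (n : ℕ) (vbar : Fin (n + 1) → Set V) (a : Fin n → A)
    (hhist : ∀ i : Fin n, powEdgeA Ea simV simA (a i) (vbar i.castSucc) (vbar i.succ))
    (un : V) (hun : un ∈ vbar (Fin.last n)) :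
    ∃ (u : Fin (n + 1) → V) (a' : Fin n → A),
      u (Fin.last n) = un ∧
      (∀ i : Fin (n + 1), u i ∈ vbar i) ∧
      (∀ i : Fin n, simA (a' i) (a i)) ∧
      (∀ i : Fin n, Ea (a' i) (u i.castSucc) (u i.succ)) :=
  powerset_history_lift_general Ea simV simA n vbar a hhist un hun
end

section
/- For every m > 1, the m×m undirected grid graph G_m (vertices {(i,j) | 1 ≤ i,j ≤ m} with edges between vertices at L1-distance 1) has tree-width at least m; equivalently, in the cops-and-robber game on the grid, m cops do not have a monotone winning strategy against a visible robber. -/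
/-- Vertices reachable from `v` in `G − X`: along edges whose targets avoid `X`. -/
def reachAvoid {V : Type*} (E : V → V → Prop) (X : Set V) (v : V) : Set V :=
  {w | Relation.ReflTransGen (fun a b => E a b ∧ b ∉ X) v w}

/-- Monotone win of `k` cops against one visible robber from position `(U, v)`
in the cops-and-robber game on the graph with edge relation `E`. -/
inductive MonCopsWin {V : Type*} (E : V → V → Prop) (k : ℕ) : Set V → V → Prop
  | step (U : Set V) (v : V) (U' : Set V) (hfin : U'.Finite) (hcard : U'.ncard ≤ k)
      (hmon : ∀ u ∈ U \ U', u ∉ reachAvoid E (U ∩ U') v)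
      (h : ∀ v' ∈ reachAvoid E (U ∩ U') v, v' ∉ U' → MonCopsWin E k U' v') :
      MonCopsWin E k U v

/-- The edge relation of the `m × m` undirected grid: vertices `(i, j)` with
`1 ≤ i, j ≤ m` (here modelled as `Fin m × Fin m`), edges between vertices at
L1-distance `1`. -/
def gridE (m : ℕ) (p q : Fin m × Fin m) : Prop :=
  (p.1 = q.1 ∧ ((p.2 : ℕ) + 1 = (q.2 : ℕ) ∨ (q.2 : ℕ) + 1 = (p.2 : ℕ))) ∨
  (p.2 = q.2 ∧ ((p.1 : ℕ) + 1 = (q.1 : ℕ) ∨ (q.1 : ℕ) + 1 = (p.1 : ℕ)))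

/-!
The crosses of the `(m - 1) × (m - 1)` subgrid, together with the last row and the last column
without its corner, form a bramble: connected vertex sets that pairwise meet or are joined by an
edge. No `m` vertices meet all of them, since that would need a vertex in every row (or every
column) of the subgrid and two more outside it. The robber therefore always escapes: sitting in a
member `B` avoiding the current cops `U`, he runs through `B ∪ B'` into a member `B'` avoiding the
announced cops `U'`, and `B ∪ B'` avoids `U ∩ U'`.
-/

open Relation Set

section Bramble

variable {V : Type*} (E : V → V → Prop)

def IsConnectedSet (B : Set V) : Prop :=
  ∀ v ∈ B, ∀ w ∈ B, ReflTransGen (fun a b => E a b ∧ b ∈ B) v w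

def Touches (B B' : Set V) : Prop :=
  (B ∩ B').Nonempty ∨ ∃ a ∈ B, ∃ b ∈ B', E a b

structure IsBramble (𝓑 : Set (Set V)) : Prop where
  isConnectedSet : ∀ B ∈ 𝓑, IsConnectedSet E B
  touches : ∀ B ∈ 𝓑, ∀ B' ∈ 𝓑, Touches E B B'

variable {E}

theorem IsConnectedSet.exists_reflTransGen_union {B B' : Set V} (hB : IsConnectedSet E B)
    (hBB' : Touches E B B') {v : V} (hv : v ∈ B) :
    ∃ w ∈ B', ReflTransGen (fun a b => E a b ∧ b ∈ B ∪ B') v w := by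
  have walk_in_B : ∀ w ∈ B, ReflTransGen (fun a b => E a b ∧ b ∈ B ∪ B') v w := fun w hw =>
    ReflTransGen.mono (fun _ _ h => ⟨h.1, Or.inl h.2⟩) _ _ (hB v hv w hw)
  rcases hBB' with ⟨w, hwB, hwB'⟩ | ⟨a, ha, b, hb, hab⟩
  · exact ⟨w, hwB', walk_in_B w hwB⟩
  · exact ⟨b, hb, (walk_in_B a ha).tail ⟨hab, Or.inr hb⟩⟩

theorem Touches.symm (hE : ∀ a b, E a b → E b a) {B B' : Set V} (h : Touches E B B') :
    Touches E B' B := by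
  rcases h with ⟨w, hw, hw'⟩ | ⟨a, ha, b, hb, hab⟩
  · exact Or.inl ⟨w, hw', hw⟩
  · exact Or.inr ⟨b, hb, a, ha, hE a b hab⟩

theorem IsBramble.nonempty {𝓑 : Set (Set V)} (h𝓑 : IsBramble E 𝓑) {B : Set V} (hB : B ∈ 𝓑) :
    B.Nonempty := by
  rcases h𝓑.touches B hB B hB with hBB | ⟨a, ha, -⟩
  · exact hBB.mono inter_subset_left
  · exact ⟨a, ha⟩

theorem IsBramble.not_monCopsWin {𝓑 : Set (Set V)} {k : ℕ} (h𝓑 : IsBramble E 𝓑)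
    (hcover : ∀ U : Set V, U.Finite → U.ncard ≤ k → ∃ B ∈ 𝓑, Disjoint B U)
    {U B : Set V} {v : V} (hB : B ∈ 𝓑) (hvB : v ∈ B) (hBU : Disjoint B U) :
    ¬ MonCopsWin E k U v := by
  intro hwin
  induction hwin generalizing B with
  | step U v U' hfin hcard _ _ escape =>
    obtain ⟨B', hB', hB'U'⟩ := hcover U' hfin hcard
    obtain ⟨w, hwB', hvw⟩ := (h𝓑.isConnectedSet B hB).exists_reflTransGen_union
      (h𝓑.touches B hB B' hB') hvB
    have hreach : w ∈ reachAvoid E (U ∩ U') v := ReflTransGen.mono (fun _ _ ⟨hab, hb⟩ =>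
      ⟨hab, fun hbU => hb.elim (hBU.notMem_of_mem_left · hbU.1)
        (hB'U'.notMem_of_mem_left · hbU.2)⟩) _ _ hvw
    exact escape w hreach (hB'U'.notMem_of_mem_left hwB') hB' hwB' hB'U'

theorem IsBramble.not_forall_monCopsWin {𝓑 : Set (Set V)} {k : ℕ} (h𝓑 : IsBramble E 𝓑)
    (hcover : ∀ U : Set V, U.Finite → U.ncard ≤ k → ∃ B ∈ 𝓑, Disjoint B U) :
    ¬ ∀ v, MonCopsWin E k ∅ v := by
  intro hwin
  obtain ⟨B, hB, -⟩ := hcover ∅ finite_empty (by simp)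
  obtain ⟨v, hv⟩ := h𝓑.nonempty hB
  exact h𝓑.not_monCopsWin hcover hB hv (disjoint_empty B) (hwin v)

end Bramble

theorem reflTransGen_of_covBy {α V : Type*} [LinearOrder α] [SuccOrder α] [IsSuccArchimedean α]
    {r : V → V → Prop} (f : α → V) {a b : α}
    (hf : ∀ c ∈ uIcc a b, ∀ d ∈ uIcc a b, c ⋖ d → r (f c) (f d) ∧ r (f d) (f c)) :
    ReflTransGen r (f a) (f b) := by
  have step : ∀ c, a ⊓ b ≤ c → c < a ⊔ b →
      r (f c) (f (Order.succ c)) ∧ r (f (Order.succ c)) (f c) := fun c h₁ h₂ =>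
    hf c ⟨h₁, h₂.le⟩ _ ⟨h₁.trans (Order.le_succ c), Order.succ_le_of_lt h₂⟩
      (Order.covBy_succ_of_not_isMax h₂.not_isMax)
  exact ReflTransGen.lift f (fun _ _ h => h) _ _ <| reflTransGen_of_succ _
    (fun c hc => (step c (inf_le_left.trans hc.1) (hc.2.trans_le le_sup_right)).1)
    (fun c hc => (step c (inf_le_right.trans hc.1) (hc.2.trans_le le_sup_left)).2)

theorem gridE_comm {m : ℕ} {p q : Fin m × Fin m} : gridE m p q ↔ gridE m q p := by
  unfold gridE; grind

namespace Grid

variable {m : ℕ}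

theorem reflTransGen_row {S : Set (Fin m × Fin m)} (i : Fin m) {a b : Fin m}
    (hS : ∀ k ∈ uIcc a b, (i, k) ∈ S) :
    ReflTransGen (fun p q => gridE m p q ∧ q ∈ S) (i, a) (i, b) :=
  reflTransGen_of_covBy (fun k => (i, k)) fun c hc d hd hcd => by
    have hcd : (c : ℕ) + 1 = d := by simpa [Fin.covBy_iff] using hcd
    exact ⟨⟨Or.inl ⟨rfl, Or.inl hcd⟩, hS d hd⟩, ⟨Or.inl ⟨rfl, Or.inr hcd⟩, hS c hc⟩⟩

theorem reflTransGen_column {S : Set (Fin m × Fin m)} (j : Fin m) {a b : Fin m}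
    (hS : ∀ k ∈ uIcc a b, (k, j) ∈ S) :
    ReflTransGen (fun p q => gridE m p q ∧ q ∈ S) (a, j) (b, j) :=
  reflTransGen_of_covBy (fun k => (k, j)) fun c hc d hd hcd => by
    have hcd : (c : ℕ) + 1 = d := by simpa [Fin.covBy_iff] using hcd
    exact ⟨⟨Or.inr ⟨rfl, Or.inl hcd⟩, hS d hd⟩, ⟨Or.inr ⟨rfl, Or.inr hcd⟩, hS c hc⟩⟩

variable (m)

def inner : Set (Fin m × Fin m) := {p | (p.1 : ℕ) < m - 1 ∧ (p.2 : ℕ) < m - 1}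

def cross (i j : Fin m) : Set (Fin m × Fin m) := {p ∈ inner m | p.1 = i ∨ p.2 = j}

def lastRow : Set (Fin m × Fin m) := {p | (p.1 : ℕ) = m - 1}

def lastColumn : Set (Fin m × Fin m) := {p | (p.1 : ℕ) < m - 1 ∧ (p.2 : ℕ) = m - 1}

def bramble : Set (Set (Fin m × Fin m)) :=
  insert (lastRow m) <| insert (lastColumn m) <|
    image2 (cross m) {i | (i : ℕ) < m - 1} {j | (j : ℕ) < m - 1}

variable {m}

theorem isConnectedSet_lastRow : IsConnectedSet (gridE m) (lastRow m) := by
  rintro ⟨i, a⟩ (hi : (i : ℕ) = m - 1) ⟨i', b⟩ (hi' : (i' : ℕ) = m - 1)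
  obtain rfl : i = i' := Fin.ext (hi.trans hi'.symm)
  exact reflTransGen_row i fun _ _ => hi

theorem isConnectedSet_lastColumn : IsConnectedSet (gridE m) (lastColumn m) := by
  rintro ⟨a, j⟩ ⟨ha : (a : ℕ) < m - 1, hj : (j : ℕ) = m - 1⟩ ⟨b, j'⟩
    ⟨hb : (b : ℕ) < m - 1, hj' : (j' : ℕ) = m - 1⟩
  obtain rfl : j = j' := Fin.ext (hj.trans hj'.symm)
  refine reflTransGen_column j fun k hk => ⟨?_, hj⟩
  show (k : ℕ) < m - 1
  rw [mem_uIcc] at hk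
  omega

theorem isConnectedSet_cross {i j : Fin m} (hi : (i : ℕ) < m - 1) (hj : (j : ℕ) < m - 1) :
    IsConnectedSet (gridE m) (cross m i j) := by
  have center : ∀ p ∈ cross m i j,
      ReflTransGen (fun p q => gridE m p q ∧ q ∈ cross m i j) p (i, j) ∧
      ReflTransGen (fun p q => gridE m p q ∧ q ∈ cross m i j) (i, j) p := by
    rintro ⟨a, b⟩ ⟨⟨ha : (a : ℕ) < m - 1, hb : (b : ℕ) < m - 1⟩, rfl | rfl⟩
    · have row : ∀ k ∈ uIcc b j, (a, k) ∈ cross m a j := fun k hk =>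
        ⟨⟨ha, show (k : ℕ) < m - 1 by rw [mem_uIcc] at hk; omega⟩, Or.inl rfl⟩
      exact ⟨reflTransGen_row a row, reflTransGen_row a (uIcc_comm b j ▸ row)⟩
    · have column : ∀ k ∈ uIcc a i, (k, b) ∈ cross m i b := fun k hk =>
        ⟨⟨show (k : ℕ) < m - 1 by rw [mem_uIcc] at hk; omega, hb⟩, Or.inr rfl⟩
      exact ⟨reflTransGen_column b column, reflTransGen_column b (uIcc_comm a i ▸ column)⟩
  exact fun p hp q hq => (center p hp).1.trans (center q hq).2

theorem touches_lastRow (hm : 1 < m) : ∀ B ∈ bramble m, Touches (gridE m) (lastRow m) B := by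
  let last : Fin m := ⟨m - 1, by omega⟩
  let pen : Fin m := ⟨m - 2, by omega⟩
  have hpen : (pen : ℕ) < m - 1 := show m - 2 < m - 1 by omega
  have up : ∀ j, gridE m (last, j) (pen, j) := fun j =>
    Or.inr ⟨rfl, Or.inr (show m - 2 + 1 = m - 1 by omega)⟩
  rintro B (rfl | rfl | ⟨i, hi, j, hj, rfl⟩)
  · exact Or.inl ⟨(last, last), rfl, rfl⟩
  · exact Or.inr ⟨(last, last), rfl, (pen, last), ⟨hpen, rfl⟩, up last⟩
  · exact Or.inr ⟨(last, j), rfl, (pen, j), ⟨⟨hpen, hj⟩, Or.inr rfl⟩, up j⟩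

theorem touches_lastColumn (hm : 1 < m) :
    ∀ B ∈ bramble m, Touches (gridE m) (lastColumn m) B := by
  let last : Fin m := ⟨m - 1, by omega⟩
  let pen : Fin m := ⟨m - 2, by omega⟩
  have hpen : (pen : ℕ) < m - 1 := show m - 2 < m - 1 by omega
  have left : ∀ i, gridE m (i, last) (i, pen) := fun i =>
    Or.inl ⟨rfl, Or.inr (show m - 2 + 1 = m - 1 by omega)⟩
  rintro B (rfl | rfl | ⟨i, hi, j, hj, rfl⟩)
  · exact (touches_lastRow hm _ (mem_insert_of_mem _ (mem_insert _ _))).symm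
      fun _ _ => gridE_comm.mp
  · exact Or.inl ⟨(pen, last), ⟨hpen, rfl⟩, ⟨hpen, rfl⟩⟩
  · exact Or.inr ⟨(i, last), ⟨hi, rfl⟩, (i, pen), ⟨⟨hi, hpen⟩, Or.inl rfl⟩, left i⟩

theorem isBramble (hm : 1 < m) : IsBramble (gridE m) (bramble m) where
  isConnectedSet := by
    rintro B (rfl | rfl | ⟨i, hi, j, hj, rfl⟩)
    exacts [isConnectedSet_lastRow, isConnectedSet_lastColumn, isConnectedSet_cross hi hj]
  touches := by
    rintro B (rfl | rfl | ⟨i, hi, j, hj, rfl⟩) B' hB'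
    · exact touches_lastRow hm B' hB'
    · exact touches_lastColumn hm B' hB'
    have hcross : cross m i j ∈ bramble m :=
      mem_insert_of_mem _ (mem_insert_of_mem _ (mem_image2_of_mem hi hj))
    rcases hB' with rfl | rfl | ⟨i', hi', j', hj', rfl⟩
    · exact (touches_lastRow hm _ hcross).symm fun _ _ => gridE_comm.mp
    · exact (touches_lastColumn hm _ hcross).symm fun _ _ => gridE_comm.mp
    · exact Or.inl ⟨(i, j'), ⟨⟨hi, hj'⟩, Or.inl rfl⟩, ⟨⟨hi, hj'⟩, Or.inr rfl⟩⟩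

theorem exists_mem_bramble_disjoint (hm : 1 < m) {U : Set (Fin m × Fin m)} (hU : U.ncard ≤ m) :
    ∃ B ∈ bramble m, Disjoint B U := by
  by_contra! hmeets
  obtain ⟨r, hrR : (r.1 : ℕ) = m - 1, hrU⟩ := not_disjoint_iff.mp (hmeets _ (mem_insert _ _))
  obtain ⟨d, ⟨hd1, hd2⟩, hdU⟩ :=
    not_disjoint_iff.mp (hmeets _ (mem_insert_of_mem _ (mem_insert _ _)))
  have houter : 2 ≤ (U \ inner m).ncard := by
    have hrd : r ≠ d := fun h => by rw [h] at hrR; omega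
    rw [← ncard_pair hrd]
    exact ncard_le_ncard (pair_subset ⟨hrU, fun h => by have := h.1; omega⟩
      ⟨hdU, fun h => by have := h.2; omega⟩)
  have hinner : m - 1 ≤ (U ∩ inner m).ncard := by
    have count : ∀ f : Fin m × Fin m → ℕ, Iio (m - 1) ⊆ f '' (U ∩ inner m) →
        m - 1 ≤ (U ∩ inner m).ncard := fun f hf =>
      (ncard_Iio_nat _).symm.le.trans ((ncard_le_ncard hf).trans ncard_image_le)
    by_contra! hfew
    obtain ⟨i, hi : i < m - 1, hrow⟩ := not_subset.mp fun h => hfew.not_ge (count (·.1) h)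
    obtain ⟨j, hj : j < m - 1, hcol⟩ := not_subset.mp fun h => hfew.not_ge (count (·.2) h)
    refine hmeets (cross m ⟨i, by omega⟩ ⟨j, by omega⟩)
      (mem_insert_of_mem _ (mem_insert_of_mem _ (mem_image2_of_mem hi hj)))
      (disjoint_left.mpr ?_)
    rintro p ⟨hp, hpi | hpj⟩ hpU
    · exact hrow ⟨p, ⟨hpU, hp⟩, congrArg Fin.val hpi⟩
    · exact hcol ⟨p, ⟨hpU, hp⟩, congrArg Fin.val hpj⟩
  have := ncard_inter_add_ncard_sdiff_eq_ncard U (inner m)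
  omega

end Grid

/-- **The `m × m` grid has tree-width at least `m`:** in the cops-and-robber game
on the grid, `m` cops do not have a monotone winning strategy against a visible
robber (who may choose his initial vertex). -/
theorem grid_treewidth_ge (m : ℕ) (hm : 1 < m) :
    ¬ ∀ v : Fin m × Fin m, MonCopsWin (gridE m) m ∅ v :=
  (Grid.isBramble hm).not_forall_monCopsWin fun _ _ hU => Grid.exists_mem_bramble_disjoint hm hU
end

section
/- Let G be a directed graph on which k cops have a (not necessarily monotone) winning strategy in the cops-and-robber game, i.e., non-monotone DAG-width nmdw(G) ≤ k. Let Ḡ be the powerset graph of a game with imperfect information on G whose ∼ⱽ-equivalence classes have size at most r. Then nmdw(Ḡ) ≤ k · r · 2^{r−1}. -/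
/-- Win of `k` cops against one visible robber, monotonicity not required:
non-monotone DAG-width `nmdw(G) ≤ k` iff `k` cops win from every position. -/
inductive NonMonCopsWin {V : Type*} (E : V → V → Prop) (k : ℕ) : Set V → V → Prop
  | step (U : Set V) (v : V) (U' : Set V) (hfin : U'.Finite) (hcard : U'.ncard ≤ k)
      (h : ∀ v' ∈ reachAvoid E (U ∩ U') v, v' ∉ U' → NonMonCopsWin E k U' v') :
      NonMonCopsWin E k U v

/-- The edge relation of the powerset graph. -/
def powEdge {V A : Type*} (Ea : A → V → V → Prop) (simV : V → V → Prop)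
    (simA : A → A → Prop) (s t : Set V) : Prop :=
  ∃ a, ∃ u ∈ Post Ea {b | simA b a} s,
    t = Post Ea {b | simA b a} s ∩ {w | simV u w}

/-- Vertices of the powerset graph: nonempty subsets of `∼ⱽ`-classes. -/
def powVertices {V : Type*} (simV : V → V → Prop) : Set (Set V) :=
  {s | s.Nonempty ∧ ∃ u, s ⊆ {w | simV u w}}


/-!
The cops on `Ḡ` simulate, in parallel, the winning strategies on `G` against every robber
position `v` in the current vertex `s` of `Ḡ` (at most `r` of them): if those strategies
place cops on `W'`, with `|W'| ≤ r k`, the cops on `Ḡ` occupy every vertex of `Ḡ` meeting `W'`,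
at most `|W'| 2^(r-1)` of them. Every element of a vertex the robber reaches in `Ḡ` is then a
position reachable by a robber in one of the simulated games, so each simulated game advances.
Termination follows by well-founded induction on ordinal ranks of the simulated game trees,
taking the largest rank over the finitely many simulated games.
-/

universe u

open Set

lemma Set.Finite.ncard_biUnion_le_mul {ι α : Type*} {t : Set ι} (ht : t.Finite)
    {s : ι → Set α} {m : ℕ} (hs : ∀ i ∈ t, (s i).ncard ≤ m) :
    (⋃ i ∈ t, s i).ncard ≤ t.ncard * m :=
  calc (⋃ i ∈ t, s i).ncard ≤ ∑ i ∈ ht.toFinset, (s i).ncard := by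
        simpa using ht.toFinset.set_ncard_biUnion_le s
    _ ≤ ht.toFinset.card • m := Finset.sum_le_card_nsmul _ _ _ (by simpa using hs)
    _ = t.ncard * m := by rw [smul_eq_mul, ncard_eq_toFinset_card t ht]

lemma ncard_setOf_mem_and_subset_le {α : Type*} {C : Set α} (hC : C.Finite) {u : α}
    (hu : u ∈ C) : {T | u ∈ T ∧ T ⊆ C}.ncard ≤ 2 ^ (C.ncard - 1) := by
  have hsub : {T | u ∈ T ∧ T ⊆ C} ⊆ insert u '' 𝒫 (C \ {u}) := by
    rintro T ⟨huT, hTC⟩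
    refine ⟨T \ {u}, sdiff_subset_sdiff_left hTC, ?_⟩
    rw [insert_sdiff_singleton, insert_eq_of_mem huT]
  calc {T | u ∈ T ∧ T ⊆ C}.ncard ≤ (insert u '' 𝒫 (C \ {u})).ncard :=
        ncard_le_ncard hsub (hC.sdiff.powerset.image _)
    _ ≤ (𝒫 (C \ {u})).ncard := ncard_image_le hC.sdiff.powerset
    _ = 2 ^ (C.ncard - 1) := by rw [ncard_powerset _ hC.sdiff, ncard_sdiff_singleton_of_mem hu]

section Powerset

variable {V A : Type*} {Ea : A → V → V → Prop} {simV : V → V → Prop} {simA : A → A → Prop}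

def powCover (simV : V → V → Prop) (W' : Set V) : Set (Set V) :=
  {T | T ∈ powVertices simV ∧ (T ∩ W').Nonempty}

lemma powCover_mono {W₁ W₂ : Set V} (h : W₁ ⊆ W₂) : powCover simV W₁ ⊆ powCover simV W₂ :=
  fun _ ⟨hT, w, hw₁, hw₂⟩ => ⟨hT, w, hw₁, h hw₂⟩

@[simp]
lemma powCover_empty : powCover simV (∅ : Set V) = ∅ := by
  simp [powCover]

lemma powCover_subset_biUnion (hV : Equivalence simV) (W' : Set V) :
    powCover simV W' ⊆ ⋃ u ∈ W', {T | u ∈ T ∧ T ⊆ {w | simV u w}} := by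
  rintro T ⟨⟨-, x, hTx⟩, u, huT, huW'⟩
  exact mem_biUnion huW' ⟨huT, fun w hw => hV.trans (hV.symm (hTx huT)) (hTx hw)⟩

lemma powCover_finite_and_ncard_le (hV : Equivalence simV) {r : ℕ}
    (hclassfin : ∀ v : V, {w | simV v w}.Finite)
    (hclasscard : ∀ v : V, {w | simV v w}.ncard ≤ r) {W' : Set V} (hW' : W'.Finite) :
    (powCover simV W').Finite ∧ (powCover simV W').ncard ≤ W'.ncard * 2 ^ (r - 1) := by
  have hfin : (⋃ u ∈ W', {T | u ∈ T ∧ T ⊆ {w | simV u w}}).Finite :=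
    hW'.biUnion fun u _ => (hclassfin u).powerset.subset fun _ hT => hT.2
  refine ⟨hfin.subset (powCover_subset_biUnion hV W'), ?_⟩
  calc (powCover simV W').ncard
      ≤ (⋃ u ∈ W', {T | u ∈ T ∧ T ⊆ {w | simV u w}}).ncard :=
        ncard_le_ncard (powCover_subset_biUnion hV W') hfin
    _ ≤ W'.ncard * 2 ^ (r - 1) := hW'.ncard_biUnion_le_mul fun u _ =>
        (ncard_setOf_mem_and_subset_le (hclassfin u) (hV.refl u)).trans
          (Nat.pow_le_pow_right two_pos (Nat.sub_le_sub_right (hclasscard u) 1))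

lemma powVertices.finite_and_ncard_le {r : ℕ} (hclassfin : ∀ v : V, {w | simV v w}.Finite)
    (hclasscard : ∀ v : V, {w | simV v w}.ncard ≤ r) {s : Set V} (hs : s ∈ powVertices simV) :
    s.Finite ∧ s.ncard ≤ r := by
  obtain ⟨-, u, hsu⟩ := hs
  exact ⟨(hclassfin u).subset hsu, (ncard_le_ncard hsu (hclassfin u)).trans (hclasscard u)⟩

lemma powEdge_mem_powVertices (hV : ∀ x, simV x x) {s t : Set V}
    (h : powEdge Ea simV simA s t) : t ∈ powVertices simV := by
  obtain ⟨a, u, hu, rfl⟩ := h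
  exact ⟨⟨u, hu, hV u⟩, u, inter_subset_right⟩

lemma reachAvoid_powEdge_subset_powVertices (hV : ∀ x, simV x x) {Y : Set (Set V)}
    {s : Set V} (hs : s ∈ powVertices simV) :
    reachAvoid (powEdge Ea simV simA) Y s ⊆ powVertices simV := by
  intro t ht
  induction ht with
  | refl => exact hs
  | tail _ hstep _ => exact powEdge_mem_powVertices hV hstep.1

lemma exists_mem_reachAvoid_of_mem_reachAvoid_powEdge (hV : ∀ x, simV x x)
    {Y : Set (Set V)} {X : V → Set V} {s t : Set V}
    (hY : ∀ T ∈ powVertices simV, T ∉ Y → ∀ w ∈ T, ∀ v ∈ s, w ∉ X v)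
    (ht : t ∈ reachAvoid (powEdge Ea simV simA) Y s) :
    ∀ w ∈ t, ∃ v ∈ s, w ∈ reachAvoid (fun x y => ∃ a, Ea a x y) (X v) v := by
  induction ht with
  | refl => exact fun w hw => ⟨w, hw, Relation.ReflTransGen.refl⟩
  | @tail m b _ hstep ih =>
    intro w hw
    obtain ⟨hedge, hbY⟩ := hstep
    have hb := powEdge_mem_powVertices hV hedge
    obtain ⟨a, u, -, rfl⟩ := hedge
    obtain ⟨x, hxm, c, -, hcxw⟩ := hw.1
    obtain ⟨v, hvs, hx⟩ := ih x hxm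
    exact ⟨v, hvs, hx.tail ⟨⟨c, hcxw⟩, hY _ hb hbY w hw v hvs⟩⟩

end Powerset

/-- Cops win from `(U, v)` by a strategy whose game tree has ordinal rank below `α`. The ranks
give a single well-founded induction for several games played simultaneously. -/
inductive NonMonCopsWinBelow {V : Type u} (E : V → V → Prop) (k : ℕ) :
    Ordinal.{u} → Set V → V → Prop
  | step (α : Ordinal.{u}) (U : Set V) (v : V) (U' : Set V) (hfin : U'.Finite)
      (hcard : U'.ncard ≤ k) (β : Ordinal.{u}) (hβ : β < α)
      (h : ∀ v' ∈ reachAvoid E (U ∩ U') v, v' ∉ U' → NonMonCopsWinBelow E k β U' v') :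
      NonMonCopsWinBelow E k α U v

namespace NonMonCopsWinBelow

variable {V : Type u} {E : V → V → Prop} {k : ℕ}

lemma mono {α α' : Ordinal.{u}} {U : Set V} {v : V} (h : NonMonCopsWinBelow E k α U v)
    (hα : α ≤ α') : NonMonCopsWinBelow E k α' U v := by
  obtain ⟨_, _, _, U', hfin, hcard, β, hβ, h⟩ := h
  exact step α' U v U' hfin hcard β (hβ.trans_le hα) h

lemma exists_placement {α : Ordinal.{u}} {U : Set V} {v : V}
    (h : NonMonCopsWinBelow E k α U v) :
    ∃ U' : Set V, U'.Finite ∧ U'.ncard ≤ k ∧ ∃ β < α,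
      ∀ v' ∈ reachAvoid E (U ∩ U') v, v' ∉ U' → NonMonCopsWinBelow E k β U' v' := by
  obtain ⟨_, _, _, U', hfin, hcard, β, hβ, h⟩ := h
  exact ⟨U', hfin, hcard, β, hβ, h⟩

end NonMonCopsWinBelow

lemma NonMonCopsWin.exists_nonMonCopsWinBelow {V : Type u} {E : V → V → Prop} {k : ℕ}
    {U : Set V} {v : V} (h : NonMonCopsWin E k U v) :
    ∃ α : Ordinal.{u}, NonMonCopsWinBelow E k α U v := by
  induction h with
  | step U v U' hfin hcard _ ih =>
    let Succ := {v' : V // v' ∈ reachAvoid E (U ∩ U') v ∧ v' ∉ U'}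
    choose g hg using fun p : Succ => ih p.1 p.2.1 p.2.2
    refine ⟨Order.succ (⨆ p, g p), .step _ U v U' hfin hcard _ (Order.lt_succ _) ?_⟩
    exact fun v' h₁ h₂ => (hg ⟨v', h₁, h₂⟩).mono (le_ciSup Ordinal.bddAbove_of_small _)

theorem nonMonCopsWin_powEdge_of_nonMonCopsWinBelow {V : Type u} {A : Type*}
    {Ea : A → V → V → Prop} {simV : V → V → Prop} {simA : A → A → Prop}
    (hV : Equivalence simV) {k r : ℕ}
    (hclassfin : ∀ v : V, {w | simV v w}.Finite)
    (hclasscard : ∀ v : V, {w | simV v w}.ncard ≤ r) (α : Ordinal.{u}) :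
    ∀ s ∈ powVertices simV, ∀ (W : Set (Set V)) (Uf : V → Set V),
      powCover simV (⋃ v ∈ s, Uf v) ⊆ W →
      (∀ v ∈ s, NonMonCopsWinBelow (fun x y => ∃ a, Ea a x y) k α (Uf v) v) →
      NonMonCopsWin (powEdge Ea simV simA) (k * r * 2 ^ (r - 1)) W s := by
  induction α using WellFoundedLT.induction with
  | _ α IH =>
  intro s hs W Uf hcov hwin
  obtain ⟨hsfin, hscard⟩ := powVertices.finite_and_ncard_le hclassfin hclasscard hs
  choose! U' hU'fin hU'card β hβ hsucc using fun v hv => (hwin v hv).exists_placement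
  set W' := ⋃ v ∈ s, U' v
  have hW'fin : W'.Finite := hsfin.biUnion hU'fin
  obtain ⟨hcovfin, hcovcard⟩ := powCover_finite_and_ncard_le hV hclassfin hclasscard hW'fin
  refine .step W s (powCover simV W') hcovfin (hcovcard.trans ?_) fun t ht htW' => ?_
  · calc W'.ncard * 2 ^ (r - 1) ≤ (s.ncard * k) * 2 ^ (r - 1) :=
          Nat.mul_le_mul_right _ (hsfin.ncard_biUnion_le_mul hU'card)
      _ ≤ k * r * 2 ^ (r - 1) := by rw [mul_comm s.ncard]; gcongr
  have htpow : t ∈ powVertices simV := reachAvoid_powEdge_subset_powVertices hV.refl hs ht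
  have hblocked : ∀ T ∈ powVertices simV, T ∉ W ∩ powCover simV W' →
      ∀ w ∈ T, ∀ v ∈ s, w ∉ Uf v ∩ U' v := fun T hT hTY w hwT v hv ⟨hwUf, hwU'⟩ =>
    hTY ⟨hcov ⟨hT, w, hwT, mem_biUnion hv hwUf⟩, hT, w, hwT, mem_biUnion hv hwU'⟩
  choose! parent hparent hreach using
    exists_mem_reachAvoid_of_mem_reachAvoid_powEdge hV.refl hblocked ht
  set γ := sSup (β '' s)
  have hγ : γ < α := ((hsfin.image β).csSup_lt_iff (hs.1.image β)).2 (forall_mem_image.2 hβ)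
  refine IH γ hγ t htpow (powCover simV W') (U' ∘ parent) (powCover_mono ?_) fun w hw => ?_
  · exact iUnion₂_subset fun w hw => subset_biUnion_of_mem (u := U') (hparent w hw)
  · refine (hsucc _ (hparent w hw) w (hreach w hw) fun hwU' => htW' ⟨htpow, w, hw, ?_⟩).mono
      (le_csSup (hsfin.image β).bddAbove (mem_image_of_mem β (hparent w hw)))
    exact mem_biUnion (hparent w hw) hwU'

theorem nonmonotone_dagwidth_powerset_general {V A : Type*}
    (Ea : A → V → V → Prop) (simV : V → V → Prop) (simA : A → A → Prop)
    (hV : Equivalence simV) (k r : ℕ)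
    (hclassfin : ∀ v : V, {w | simV v w}.Finite)
    (hclasscard : ∀ v : V, {w | simV v w}.ncard ≤ r)
    (hwin : ∀ v : V, NonMonCopsWin (fun x y => ∃ a, Ea a x y) k ∅ v) :
    ∀ s ∈ powVertices simV,
      NonMonCopsWin (powEdge Ea simV simA) (k * r * 2 ^ (r - 1)) ∅ s := by
  choose α hα using fun v => (hwin v).exists_nonMonCopsWinBelow
  intro s hs
  refine nonMonCopsWin_powEdge_of_nonMonCopsWinBelow hV hclassfin hclasscard (⨆ v, α v) s hs
    ∅ (fun _ => ∅) (by simp) fun v _ => (hα v).mono (le_ciSup Ordinal.bddAbove_of_small v)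

/-- **Non-monotone DAG-width is preserved by the powerset construction.**
If `k` cops have a (not necessarily monotone) winning strategy on `G` and every
`∼ⱽ`-class has size at most `r`, then `k · r · 2^(r−1)` cops have a (not
necessarily monotone) winning strategy on the powerset graph `Ḡ`, i.e.
`nmdw(Ḡ) ≤ k · r · 2^(r−1)`. -/
theorem nonmonotone_dagwidth_powerset {V A : Type*}
    (Ea : A → V → V → Prop) (simV : V → V → Prop) (simA : A → A → Prop)
    (hV : Equivalence simV) (hA : Equivalence simA) (k r : ℕ)
    (hclassfin : ∀ v : V, {w | simV v w}.Finite)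
    (hclasscard : ∀ v : V, {w | simV v w}.ncard ≤ r)
    (hwin : ∀ v : V, NonMonCopsWin (fun x y => ∃ a, Ea a x y) k ∅ v) :
    ∀ s ∈ powVertices simV,
      NonMonCopsWin (powEdge Ea simV simA) (k * r * 2 ^ (r - 1)) ∅ s :=
  nonmonotone_dagwidth_powerset_general Ea simV simA hV k r hclassfin hclasscard hwin
end

section
/- Let G be a directed graph with dpw(G) ≤ k, i.e., k+1 cops have a monotone winning strategy against an invisible robber on G. Let Ḡ be the powerset graph of a game with imperfect information on G whose ∼ⱽ-classes have size at most r. Then dpw(Ḡ) ≤ (k+1) · 2^{r−1} − 1, i.e., (k+1)·2^{r−1} cops have a monotone winning strategy against an invisible robber on Ḡ. -/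
/-- Monotone clearing of the contamination set `R` by `k` cops in the
invisible-robber (directed path-width) game: `dpw(G) ≤ k − 1` iff
`InvClear E k ∅ univ`. -/
inductive InvClear {V : Type*} (E : V → V → Prop) (k : ℕ) : Set V → Set V → Prop
  | empty (U : Set V) : InvClear E k U ∅
  | step (U R U' : Set V) (hfin : U'.Finite) (hcard : U'.ncard ≤ k)
      (hmon : {w | ∃ x ∈ R, w ∈ reachAvoid E (U ∩ U') x} \ U' ⊆ R)
      (h : InvClear E k U' ({w | ∃ x ∈ R, w ∈ reachAvoid E (U ∩ U') x} \ U')) :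
      InvClear E k U R

/-- The powerset graph: the powerset edge relation restricted to the vertices
of the powerset graph. -/
def powEdgeRes {V A : Type*} (Ea : A → V → V → Prop) (simV : V → V → Prop)
    (simA : A → A → Prop) (s t : Set V) : Prop :=
  powEdge Ea simV simA s t ∧ s ∈ powVertices simV ∧ t ∈ powVertices simV

/-!
Play the cop strategy for `G` on `Ḡ`, putting a cop on every vertex of `Ḡ` that meets the current
cop set of `G`. The invariant is that every contaminated vertex of `Ḡ` is a subset of the
contaminated set `R` of `G`, and that the contaminated family is closed under edges avoiding the
cops. It survives a round because each vertex of `Ḡ` entered along an edge consists of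
`G`-successors of its source: if it met the old cops of `G` while escaping the lifted ones, the
monotonicity of the strategy on `G` would put a guarded vertex into `R`. The only property of `Ḡ`
used besides this is that a vertex of `G` lies in at most `2 ^ (r - 1)` subsets of its
`∼ⱽ`-class, which bounds the number of lifted cops by `(k + 1) * 2 ^ (r - 1)`.
-/

section Lift

variable {V : Type*}

def liftCops (W : Set (Set V)) (U : Set V) : Set (Set V) :=
  {s ∈ W | (s ∩ U).Nonempty}

section LiftCops

variable {W : Set (Set V)}

@[simp]
lemma liftCops_empty (W : Set (Set V)) : liftCops W ∅ = ∅ := by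
  simp [liftCops]

lemma liftCops_eq_biUnion (W : Set (Set V)) (U : Set V) :
    liftCops W U = ⋃ u ∈ U, {s ∈ W | u ∈ s} := by
  ext s
  simp only [liftCops, Set.mem_iUnion, exists_prop]
  exact ⟨fun ⟨hs, u, hu⟩ => ⟨u, hu.2, hs, hu.1⟩, fun ⟨u, hu, hs, hus⟩ => ⟨hs, u, hus, hu⟩⟩

lemma encard_liftCops_le {m : ℕ} (hdeg : ∀ u, {s ∈ W | u ∈ s}.encard ≤ m) {U : Set V}
    (hU : U.Finite) : (liftCops W U).encard ≤ (U.ncard * m : ℕ) := by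
  rw [liftCops_eq_biUnion, ← hU.coe_toFinset, Set.ncard_coe_finset]
  calc (⋃ u ∈ hU.toFinset, {s ∈ W | u ∈ s}).encard
      ≤ ∑ u ∈ hU.toFinset, {s ∈ W | u ∈ s}.encard := Finset.set_encard_biUnion_le _ _
    _ ≤ hU.toFinset.card • (m : ℕ∞) := Finset.sum_le_card_nsmul _ _ _ fun u _ => hdeg u
    _ = (hU.toFinset.card * m : ℕ) := by simp

variable {E : V → V → Prop} {F : Set V → Set V → Prop}

lemma mem_of_mem_reachAvoid_liftCops (hFE : ∀ s t, F s t → ∀ w ∈ t, ∃ x ∈ s, E x w)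
    {U U' R : Set V} {S : Set (Set V)}
    (hmon : {w | ∃ x ∈ R, w ∈ reachAvoid E (U ∩ U') x} \ U' ⊆ R) (hRU : Disjoint R U)
    (hSR : ∀ t ∈ S, t ⊆ R) (hS : ∀ s ∈ S, ∀ t, F s t → t ∉ liftCops W U → t ∈ S)
    {s t : Set V} (hs : s ∈ S) (ht : t ∈ reachAvoid F (liftCops W U ∩ liftCops W U') s) :
    t ∈ S := by
  induction ht with
  | refl => exact hs
  | tail _ hbc hb =>
    obtain ⟨hedge, hcX⟩ := hbc
    refine hS _ hb _ hedge ?_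
    rintro ⟨hcW, w, hwc, hwU⟩
    have hwU' : w ∉ U' := fun hwU' => hcX ⟨⟨hcW, w, hwc, hwU⟩, hcW, w, hwc, hwU'⟩
    obtain ⟨x, hxb, hxw⟩ := hFE _ _ hedge w hwc
    have hwR : w ∈ R := hmon ⟨⟨x, hSR _ hb hxb, .single ⟨hxw, fun h => hwU' h.2⟩⟩, hwU'⟩
    exact Set.disjoint_left.1 hRU hwR hwU

theorem InvClear.lift {k m : ℕ} (hW : ∅ ∉ W) (hdeg : ∀ u, {s ∈ W | u ∈ s}.encard ≤ m)
    (hFE : ∀ s t, F s t → ∀ w ∈ t, ∃ x ∈ s, E x w) {U R : Set V} (h : InvClear E k U R)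
    {S : Set (Set V)} (hSW : S ⊆ W) (hSR : ∀ t ∈ S, t ⊆ R) (hRU : Disjoint R U)
    (hS : ∀ s ∈ S, ∀ t, F s t → t ∉ liftCops W U → t ∈ S) :
    InvClear F (k * m) (liftCops W U) S := by
  induction h generalizing S with
  | empty U =>
    convert InvClear.empty (liftCops W U)
    exact Set.eq_empty_of_forall_notMem fun t ht =>
      hW (Set.subset_empty_iff.1 (hSR t ht) ▸ hSW ht)
  | step U R U' hfin hcard hmon _ ih =>
    have hback : ∀ t ∈ {t | ∃ s ∈ S, t ∈ reachAvoid F (liftCops W U ∩ liftCops W U') s},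
        t ∈ S := fun t ⟨s, hs, hst⟩ =>
      mem_of_mem_reachAvoid_liftCops hFE hmon hRU hSR hS hs hst
    have hcops : (liftCops W U').encard ≤ (k * m : ℕ) :=
      (encard_liftCops_le hdeg hfin).trans (by gcongr)
    rw [Set.encard_le_coe_iff_finite_ncard_le] at hcops
    refine .step _ _ _ hcops.1 hcops.2 (fun t ht => hback t ht.1) (ih ?_ ?_ ?_ ?_)
    · exact fun t ht => hSW (hback t ht.1)
    · intro t ht w hw
      exact ⟨⟨w, hSR t (hback t ht.1) hw, .refl⟩,
        fun hwU' => ht.2 ⟨hSW (hback t ht.1), w, hw, hwU'⟩⟩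
    · exact Set.disjoint_sdiff_left
    · rintro s ⟨⟨x, hx, hxs⟩, -⟩ t hst htU'
      exact ⟨⟨x, hx, hxs.tail ⟨hst, fun h => htU' h.2⟩⟩, htU'⟩

end LiftCops

lemma encard_setOf_mem_subset_le {C : Set V} (hC : C.Finite) {a : V} (ha : a ∈ C) :
    {s | a ∈ s ∧ s ⊆ C}.encard ≤ (2 ^ (C.ncard - 1) : ℕ) := by
  have hsub : {s | a ∈ s ∧ s ⊆ C} ⊆ insert a '' 𝒫 (C \ {a}) := by
    rintro s ⟨has, hsC⟩
    exact ⟨s \ {a}, Set.sdiff_subset_sdiff_left hsC, by simp [has]⟩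
  have hpow : (𝒫 (C \ {a})).encard = (2 ^ (C.ncard - 1) : ℕ) := by
    rw [← hC.sdiff.powerset.cast_ncard_eq, Set.ncard_powerset _ hC.sdiff,
      Set.ncard_sdiff_singleton_of_mem ha]
  exact hpow ▸ (Set.encard_le_encard hsub).trans (Set.encard_image_le _ _)

section Powerset

variable {A : Type*} {Ea : A → V → V → Prop} {simV : V → V → Prop} {simA : A → A → Prop}

lemma exists_edge_of_powEdgeRes {s t : Set V} (h : powEdgeRes Ea simV simA s t) :
    ∀ w ∈ t, ∃ x ∈ s, ∃ a, Ea a x w := by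
  obtain ⟨⟨a, u, -, rfl⟩, -, -⟩ := h
  rintro w ⟨⟨x, hx, b, -, hb⟩, -⟩
  exact ⟨x, hx, b, hb⟩

lemma encard_powVertices_mem_le (hV : Equivalence simV) {r : ℕ}
    (hclassfin : ∀ v : V, {w | simV v w}.Finite)
    (hclasscard : ∀ v : V, {w | simV v w}.ncard ≤ r) (u : V) :
    {s ∈ powVertices simV | u ∈ s}.encard ≤ (2 ^ (r - 1) : ℕ) := by
  have hsub : {s ∈ powVertices simV | u ∈ s} ⊆ {s | u ∈ s ∧ s ⊆ {w | simV u w}} := by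
    rintro s ⟨⟨-, v, hsv⟩, hus⟩
    exact ⟨hus, fun w hw => hV.trans (hV.symm (hsv hus)) (hsv hw)⟩
  calc {s ∈ powVertices simV | u ∈ s}.encard
      ≤ (2 ^ ({w | simV u w}.ncard - 1) : ℕ) :=
        (Set.encard_le_encard hsub).trans (encard_setOf_mem_subset_le (hclassfin u) (hV.refl u))
    _ ≤ (2 ^ (r - 1) : ℕ) := by
        gcongr
        · norm_num
        · exact hclasscard u

end Powerset

end Lift

theorem directed_pathwidth_powerset_general {V A : Type*}
    (Ea : A → V → V → Prop) (simV : V → V → Prop) (simA : A → A → Prop)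
    (hV : Equivalence simV) (k r : ℕ)
    (hclassfin : ∀ v : V, {w | simV v w}.Finite)
    (hclasscard : ∀ v : V, {w | simV v w}.ncard ≤ r)
    (hwin : InvClear (fun x y => ∃ a, Ea a x y) (k + 1) ∅ Set.univ) :
    InvClear (powEdgeRes Ea simV simA) ((k + 1) * 2 ^ (r - 1)) ∅
      (powVertices simV) := by
  simpa using hwin.lift (W := powVertices simV)
    (fun h => Set.not_nonempty_empty h.1)
    (encard_powVertices_mem_le hV hclassfin hclasscard)
    (fun _ _ => exists_edge_of_powEdgeRes) subset_rfl
    (fun _ _ => Set.subset_univ _) (Set.disjoint_empty _) (fun _ _ _ h _ => h.2.2)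

/-- **Directed path-width is preserved by the powerset construction.**
If `dpw(G) ≤ k`, i.e. `k+1` cops have a monotone winning strategy against an
invisible robber on `G`, and every `∼ⱽ`-class has size at most `r`, then
`(k+1) · 2^(r−1)` cops have a monotone winning strategy against an invisible
robber on the powerset graph `Ḡ`; i.e. `dpw(Ḡ) ≤ (k+1) · 2^(r−1) − 1`. -/
theorem directed_pathwidth_powerset {V A : Type*}
    (Ea : A → V → V → Prop) (simV : V → V → Prop) (simA : A → A → Prop)
    (hV : Equivalence simV) (hA : Equivalence simA) (k r : ℕ)
    (hclassfin : ∀ v : V, {w | simV v w}.Finite)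
    (hclasscard : ∀ v : V, {w | simV v w}.ncard ≤ r)
    (hwin : InvClear (fun x y => ∃ a, Ea a x y) (k + 1) ∅ Set.univ) :
    InvClear (powEdgeRes Ea simV simA) ((k + 1) * 2 ^ (r - 1)) ∅
      (powVertices simV) :=
  directed_pathwidth_powerset_general Ea simV simA hV k r hclassfin hclasscard hwin
end

section
/- Let G be a directed graph and f a positional monotone winning strategy for k cops against one robber in the cops-and-robber game on G. Then there exists a positional monotone winning strategy f* for k cops such that for every position (U,v) arising in a play consistent with f*: f*(U,v) \ U ≠ ∅, and every u ∈ f*(U,v) \ U is reachable from v in G − U. -/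
/-- Cop positions `(U, v)` that arise in plays of the cops-and-robber game
consistent with the positional cop strategy `f`. -/
inductive FReach {V : Type*} (E : V → V → Prop) (f : Set V → V → Set V) : Set V → V → Prop
  | init (v : V) : FReach E f ∅ v
  | step (U : Set V) (v : V) (h : FReach E f U v) (v' : V)
      (hv' : v' ∈ reachAvoid E (U ∩ f U v) v) (hv'' : v' ∉ f U v) :
      FReach E f (f U v) v'

/-- One round of the cops-and-robber game played according to the positional cop
strategy `f`: from the cop position `p` to the cop position `q`. -/
def copStep {V : Type*} (E : V → V → Prop) (f : Set V → V → Set V)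
    (p q : Set V × V) : Prop :=
  q.1 = f p.1 p.2 ∧ q.2 ∈ reachAvoid E (p.1 ∩ q.1) p.2 ∧ q.2 ∉ q.1

/-- `f` uses at most `k` cops (on positions arising in plays consistent with `f`). -/
def UsesAtMost {V : Type*} (E : V → V → Prop) (f : Set V → V → Set V) (k : ℕ) : Prop :=
  ∀ U v, FReach E f U v → (f U v).Finite ∧ (f U v).ncard ≤ k

/-- `f` is robber-monotone: in any consistent play no vacated cop vertex is
reachable by the robber. -/
def StratMonotone {V : Type*} (E : V → V → Prop) (f : Set V → V → Set V) : Prop :=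
  ∀ U v, FReach E f U v → ∀ u ∈ U \ f U v, u ∉ reachAvoid E (U ∩ f U v) v

/-- `f` is winning: there is no infinite play consistent with `f`
(so the robber is always eventually captured). -/
def StratWinning {V : Type*} (E : V → V → Prop) (f : Set V → V → Set V) : Prop :=
  ¬ ∃ p : ℕ → Set V × V, (p 0).1 = ∅ ∧ ∀ n, copStep E f (p n) (p (n + 1))

/-!
A position `(Us, v)` of the new game is shadowed by a position `(U, v)` that arises against `f`
and leaves the robber the same territory `reachAvoid E U v = reachAvoid E Us v`. From a shadow,
the new strategy keeps only the cops of `f U v` that stand on `Us` or in the territory. By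
monotonicity of `f` this does not enlarge the territory, so the robber's answer is also a legal
answer against `f` and the successor position of `f` shadows the new position; moves of `f` that
place no cop in the territory are skipped, which preserves the shadow. Since `f` is winning, its
game tree is well founded; choosing the shadow of least ordinal rank makes the new strategy
positional, and this least rank strictly drops every round, so every play is finite.
-/

section

variable {V : Type*} {E : V → V → Prop}

section reachAvoid

variable {X Y S : Set V} {v w : V}

theorem mem_reachAvoid_self : v ∈ reachAvoid E X v := Relation.ReflTransGen.refl

theorem reachAvoid_anti (h : X ⊆ Y) : reachAvoid E Y v ⊆ reachAvoid E X v :=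
  fun _ hw => Relation.ReflTransGen.mono (fun _ _ hab => ⟨hab.1, fun hb => hab.2 (h hb)⟩) _ _ hw

theorem notMem_of_mem_reachAvoid (hv : v ∉ X) (hw : w ∈ reachAvoid E X v) : w ∉ X := by
  rcases hw.cases_tail with rfl | ⟨_, _, hlast⟩
  exacts [hv, hlast.2]

theorem reachAvoid_subset_of_mem (hw : w ∈ reachAvoid E X v) :
    reachAvoid E X w ⊆ reachAvoid E X v :=
  fun _ hu => hw.trans hu

theorem reachAvoid_subset_of_closed (hv : v ∈ S) (hS : ∀ x ∈ S, ∀ y, E x y → y ∉ X → y ∈ S) :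
    reachAvoid E X v ⊆ S := by
  intro w hw
  induction hw with
  | refl => exact hv
  | tail _ hxy ih => exact hS _ ih _ hxy.1 hxy.2

theorem reachAvoid_subset_of_inter_subset (h : X ∩ reachAvoid E Y v ⊆ Y) :
    reachAvoid E Y v ⊆ reachAvoid E X v := by
  refine fun w hw => (reachAvoid_subset_of_closed (S := reachAvoid E X v ∩ reachAvoid E Y v)
    ⟨mem_reachAvoid_self, mem_reachAvoid_self⟩ ?_ hw).1
  rintro x ⟨hxX, hxY⟩ y hxy hyY
  have hy : y ∈ reachAvoid E Y v := hxY.tail ⟨hxy, hyY⟩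
  exact ⟨hxX.tail ⟨hxy, fun hyX => hyY (h ⟨hyX, hy⟩)⟩, hy⟩

theorem reachAvoid_inter_eq (h : reachAvoid E X v = reachAvoid E Y v) :
    reachAvoid E (X ∩ Y) v = reachAvoid E X v := by
  refine (reachAvoid_subset_of_closed mem_reachAvoid_self ?_).antisymm
    (reachAvoid_anti Set.inter_subset_left)
  intro x hx y hxy hy
  rcases not_and_or.mp hy with hyX | hyY
  · exact hx.tail ⟨hxy, hyX⟩
  · rw [h] at hx ⊢
    exact hx.tail ⟨hxy, hyY⟩

end reachAvoid

section game

variable {g f : Set V → V → Set V} {U : Set V} {v : V}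

theorem FReach.notMem (h : FReach E g U v) : v ∉ U := by
  cases h with
  | init => exact Set.notMem_empty v
  | step _ _ _ _ _ hv'' => exact hv''

theorem FReach.of_copStep {p q : Set V × V} (h : FReach E g p.1 p.2) (hs : copStep E g p q) :
    FReach E g q.1 q.2 := by
  obtain ⟨hq, hv', hv''⟩ := hs
  rw [hq] at hv' hv'' ⊢
  exact .step _ _ h _ hv' hv''

theorem StratWinning.acc (hwin : StratWinning E f) (h : FReach E f U v) :
    Acc (flip (copStep E f)) (U, v) := by
  induction h with
  | init v =>
    by_contra hna
    obtain ⟨p, hp0, hp⟩ := not_acc_iff_exists_descending_chain.mp hna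
    exact hwin ⟨p, by rw [hp0], hp⟩
  | step U v _ v' hv' hv'' ih => exact ih.inv ⟨rfl, hv', hv''⟩

theorem StratMonotone.reachAvoid_inter_eq (hmon : StratMonotone E f) (h : FReach E f U v) :
    reachAvoid E (U ∩ f U v) v = reachAvoid E U v := by
  refine (reachAvoid_subset_of_inter_subset ?_).antisymm (reachAvoid_anti Set.inter_subset_left)
  rintro u ⟨huU, hu⟩
  by_contra hnot
  exact hmon U v h u ⟨huU, fun huW => hnot ⟨huU, huW⟩⟩ hu

open Classical in
variable (E f) in
/-- Junk value `0` off the well-founded part of the game tree of `f`. -/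
noncomputable def gameRank (p : Set V × V) : Ordinal :=
  if h : Acc (flip (copStep E f)) p then h.rank else 0

theorem gameRank_lt {p q : Set V × V} (hp : Acc (flip (copStep E f)) p)
    (hs : copStep E f p q) : gameRank E f q < gameRank E f p := by
  rw [gameRank, gameRank, dif_pos hp, dif_pos (hp.inv hs)]
  exact hp.rank_lt_of_rel hs

end game

section shadow

variable {f : Set V → V → Set V} {Us U W : Set V} {v v' : V}

variable (E f) in
structure IsShadow (Us : Set V) (v : V) (U : Set V) : Prop where
  freach : FReach E f U v
  reachAvoid_eq : reachAvoid E Us v = reachAvoid E U v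

variable (E f) in
def IsUsefulShadow (Us : Set V) (v : V) (U : Set V) : Prop :=
  IsShadow E f Us v U ∧ (f U v ∩ reachAvoid E Us v).Nonempty

variable (E) in
def activeMove (W Us : Set V) (v : V) : Set V :=
  W ∩ (Us ∪ reachAvoid E Us v)

theorem inter_activeMove : Us ∩ activeMove E W Us v = Us ∩ W := by
  ext x
  simp only [activeMove, Set.mem_inter_iff, Set.mem_union]
  tauto

theorem activeMove_diff (hv : v ∉ Us) : activeMove E W Us v \ Us = W ∩ reachAvoid E Us v := by
  ext x
  simp only [activeMove, Set.mem_sdiff, Set.mem_inter_iff, Set.mem_union]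
  have := fun hx : x ∈ reachAvoid E Us v => notMem_of_mem_reachAvoid hv hx
  tauto

theorem IsShadow.reachAvoid_inter_eq (hmon : StratMonotone E f) (h : IsShadow E f Us v U) :
    reachAvoid E (U ∩ f U v) v = reachAvoid E Us v :=
  (hmon.reachAvoid_inter_eq h.freach).trans h.reachAvoid_eq.symm

theorem IsShadow.reachAvoid_inter_activeMove (hmon : StratMonotone E f)
    (h : IsShadow E f Us v U) :
    reachAvoid E (Us ∩ activeMove E (f U v) Us v) v = reachAvoid E Us v := by
  have hU := h.reachAvoid_inter_eq hmon
  rw [inter_activeMove]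
  refine Set.Subset.antisymm ?_ (reachAvoid_anti Set.inter_subset_left)
  calc reachAvoid E (Us ∩ f U v) v
      ⊆ reachAvoid E (U ∩ f U v ∩ Us) v := reachAvoid_anti fun _ hx => ⟨hx.2, hx.1.2⟩
    _ = reachAvoid E Us v := (_root_.reachAvoid_inter_eq hU).trans hU

theorem IsShadow.skip (hmon : StratMonotone E f) (h : IsShadow E f Us v U)
    (hskip : f U v ∩ reachAvoid E Us v = ∅) :
    copStep E f (U, v) (f U v, v) ∧ IsShadow E f Us v (f U v) := by
  have hR := h.reachAvoid_inter_eq hmon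
  have hstep : copStep E f (U, v) (f U v, v) :=
    ⟨rfl, mem_reachAvoid_self, fun hv => hskip.subset ⟨hv, mem_reachAvoid_self⟩⟩
  refine ⟨hstep, h.freach.of_copStep hstep, ?_⟩
  rw [← hR]
  refine Set.Subset.antisymm (reachAvoid_subset_of_inter_subset ?_)
    (reachAvoid_anti Set.inter_subset_right)
  rw [hR, hskip]
  exact Set.empty_subset _

theorem IsShadow.respond (hmon : StratMonotone E f) (h : IsShadow E f Us v U)
    (hv' : v' ∈ reachAvoid E (Us ∩ activeMove E (f U v) Us v) v)
    (hv'' : v' ∉ activeMove E (f U v) Us v) :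
    copStep E f (U, v) (f U v, v') ∧ IsShadow E f (activeMove E (f U v) Us v) v' (f U v) := by
  have hR := h.reachAvoid_inter_activeMove hmon
  have hv'R : v' ∈ reachAvoid E Us v := hR ▸ hv'
  have hstep : copStep E f (U, v) (f U v, v') := by
    refine ⟨rfl, ?_, fun hW => hv'' ⟨hW, Or.inr hv'R⟩⟩
    exact (h.reachAvoid_inter_eq hmon).symm ▸ hv'R
  refine ⟨hstep, h.freach.of_copStep hstep, ?_⟩
  refine Set.Subset.antisymm (reachAvoid_subset_of_inter_subset ?_)
    (reachAvoid_anti Set.inter_subset_left)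
  rintro u ⟨huW, hu⟩
  have huR : u ∈ reachAvoid E Us v :=
    hR ▸ reachAvoid_subset_of_mem hv' (reachAvoid_anti Set.inter_subset_right hu)
  exact ⟨huW, Or.inr huR⟩

theorem IsShadow.exists_useful (hmon : StratMonotone E f) (hwin : StratWinning E f)
    (h : IsShadow E f Us v U) :
    ∃ U', IsUsefulShadow E f Us v U' ∧ gameRank E f (U', v) ≤ gameRank E f (U, v) := by
  obtain ⟨o, ho⟩ : ∃ o, gameRank E f (U, v) = o := ⟨_, rfl⟩
  induction o using WellFoundedLT.induction generalizing U with
  | ind o ih =>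
    by_cases huseful : (f U v ∩ reachAvoid E Us v).Nonempty
    · exact ⟨U, ⟨h, huseful⟩, le_rfl⟩
    obtain ⟨hstep, hW⟩ := h.skip hmon (Set.not_nonempty_iff_eq_empty.mp huseful)
    have hlt : gameRank E f (f U v, v) < o := ho ▸ gameRank_lt (hwin.acc h.freach) hstep
    obtain ⟨U', hU', hle⟩ := ih _ hlt hW rfl
    exact ⟨U', hU', ho ▸ hle.trans hlt.le⟩

open Classical in
variable (E f) in
noncomputable def bestShadow (Us : Set V) (v : V) : Set V :=
  if h : ∃ U, IsUsefulShadow E f Us v U then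
    Function.argminOn (fun U => gameRank E f (U, v)) {U | IsUsefulShadow E f Us v U} h
  else ∅

theorem bestShadow_spec (h : IsUsefulShadow E f Us v U) :
    IsUsefulShadow E f Us v (bestShadow E f Us v) ∧
      gameRank E f (bestShadow E f Us v, v) ≤ gameRank E f (U, v) := by
  rw [bestShadow, dif_pos ⟨U, h⟩]
  exact ⟨Function.argminOn_mem (fun U => gameRank E f (U, v)) {U | IsUsefulShadow E f Us v U} _,
    Function.argminOn_le (fun U => gameRank E f (U, v)) {U | IsUsefulShadow E f Us v U} h⟩

variable (E f) in
noncomputable def activeStrategy (Us : Set V) (v : V) : Set V :=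
  activeMove E (f (bestShadow E f Us v) v) Us v

theorem isUsefulShadow_bestShadow (hmon : StratMonotone E f) (hwin : StratWinning E f)
    (h : FReach E (activeStrategy E f) Us v) :
    IsUsefulShadow E f Us v (bestShadow E f Us v) := by
  suffices ∃ U, IsUsefulShadow E f Us v U from (bestShadow_spec this.choose_spec).1
  induction h with
  | init v =>
    exact ((⟨.init v, rfl⟩ : IsShadow E f ∅ v ∅).exists_useful hmon hwin).imp fun _ h => h.1
  | step Us v _ v' hv' hv'' ih =>
    have hbest := (bestShadow_spec ih.choose_spec).1
    exact ((hbest.1.respond hmon hv' hv'').2.exists_useful hmon hwin).imp fun _ h => h.1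

variable (E f) in
noncomputable def activeRank (p : Set V × V) : Ordinal :=
  gameRank E f (bestShadow E f p.1 p.2, p.2)

theorem activeRank_lt (hmon : StratMonotone E f) (hwin : StratWinning E f)
    {p q : Set V × V} (h : FReach E (activeStrategy E f) p.1 p.2)
    (hs : copStep E (activeStrategy E f) p q) : activeRank E f q < activeRank E f p := by
  have hbest := isUsefulShadow_bestShadow hmon hwin h
  obtain ⟨hq, hv', hv''⟩ := hs
  rw [hq] at hv' hv''
  obtain ⟨hstep, hW⟩ := hbest.1.respond hmon hv' hv''
  obtain ⟨U', hU', hle⟩ := hW.exists_useful hmon hwin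
  calc activeRank E f q
      ≤ gameRank E f (U', q.2) := by rw [activeRank, hq]; exact (bestShadow_spec hU').2
    _ ≤ gameRank E f (f (bestShadow E f p.1 p.2) p.2, q.2) := hle
    _ < activeRank E f p := gameRank_lt (hwin.acc hbest.1.freach) hstep

theorem activeStrategy_winning (hmon : StratMonotone E f) (hwin : StratWinning E f) :
    StratWinning E (activeStrategy E f) := by
  rintro ⟨p, hp0, hp⟩
  have hreach : ∀ n, FReach E (activeStrategy E f) (p n).1 (p n).2 := by
    intro n
    induction n with
    | zero => rw [hp0]; exact .init _
    | succ n ih => exact ih.of_copStep (hp n)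
  obtain ⟨n, hn⟩ := WellFounded.not_rel_apply_succ (r := (· < ·)) fun n => activeRank E f (p n)
  exact hn (activeRank_lt hmon hwin (hreach n) (hp n))

end shadow

end

/-- **Active strategies suffice (Lemma `lemma_useless_moves`).**
If `f` is a positional monotone winning strategy for `k` cops against one robber
on a directed graph `G`, then there is a positional monotone winning strategy
`f*` for `k` cops such that for every position `(U, v)` arising in a play
consistent with `f*`: `f*(U,v) \ U ≠ ∅`, and every `u ∈ f*(U,v) \ U` is
reachable from `v` in `G − U`. -/
theorem active_strategy_exists {V : Type*} (E : V → V → Prop) (k : ℕ)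
    (f : Set V → V → Set V)
    (hk : UsesAtMost E f k) (hmon : StratMonotone E f) (hwin : StratWinning E f) :
    ∃ fs : Set V → V → Set V,
      UsesAtMost E fs k ∧ StratMonotone E fs ∧ StratWinning E fs ∧
      ∀ U v, FReach E fs U v →
        (fs U v \ U).Nonempty ∧ ∀ u ∈ fs U v \ U, u ∈ reachAvoid E U v := by
  refine ⟨activeStrategy E f, fun Us v h => ?_, fun Us v h => ?_,
    activeStrategy_winning hmon hwin, fun Us v h => ?_⟩ <;>
    have hbest := isUsefulShadow_bestShadow hmon hwin h
  · obtain ⟨hfin, hcard⟩ := hk _ v hbest.1.freach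
    exact ⟨hfin.subset Set.inter_subset_left,
      (Set.ncard_le_ncard Set.inter_subset_left hfin).trans hcard⟩
  · rintro u ⟨huUs, -⟩ hu
    rw [activeStrategy, hbest.1.reachAvoid_inter_activeMove hmon] at hu
    exact notMem_of_mem_reachAvoid h.notMem hu huUs
  · rw [activeStrategy, activeMove_diff h.notMem]
    exact ⟨hbest.2, fun _ hu => hu.2⟩
end

section
/- For every directed graph G on n vertices, the sequence dw_r(G) of cop numbers against r robbers is monotonically non-decreasing in r, with dw_1(G) equal to the DAG-width of G and dw_n(G) equal to the directed path-width of G plus 1. -/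
/-- Monotone win of `k` cops against (at most) `r` robbers that move along
cop-free paths and may jump to each other. -/
inductive MonCopsWinMulti {V : Type*} (E : V → V → Prop) (k r : ℕ) : Set V → Set V → Prop
  | captured (U : Set V) : MonCopsWinMulti E k r U ∅
  | step (U R U' : Set V) (hfin : U'.Finite) (hcard : U'.ncard ≤ k)
      (hmon : ∀ u ∈ U \ U', ∀ x ∈ R, u ∉ reachAvoid E (U ∩ U') x)
      (h : ∀ R' : Set V, R'.Finite → R'.ncard ≤ r → R' ∩ U' = ∅ →
            (∀ y ∈ R', ∃ x ∈ R, y ∈ reachAvoid E (U ∩ U') x) →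
            MonCopsWinMulti E k r U' R') :
      MonCopsWinMulti E k r U R

/-- `dw_r(G)`: the minimal number of cops that monotonically capture `r` robbers. -/
noncomputable def dwr {V : Type*} (E : V → V → Prop) (r : ℕ) : ℕ :=
  sInf {k | ∀ R : Set V, R.Finite → R.ncard ≤ r → MonCopsWinMulti E k r ∅ R}

/-- The DAG-width of `G`: the minimal number of cops that monotonically capture
one visible robber. -/
noncomputable def dagWidth {V : Type*} (E : V → V → Prop) : ℕ :=
  sInf {k | ∀ v : V, MonCopsWin E k ∅ v}

/-- The directed path-width of `G` plus one: the minimal number of cops that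
monotonically clear `G` against an invisible robber. -/
noncomputable def dpwPlusOne {V : Type*} (E : V → V → Prop) : ℕ :=
  sInf {k | InvClear E k ∅ Set.univ}

/-!
With one robber the multi-robber game is literally the DAG-width game. With `|V|` robbers
the cops may as well assume a robber on every vertex reachable from the robbers' territory,
so the robber set becomes the contaminated set of the invisible-robber game: in a monotone
play it stays closed under out-edges up to the cops, and conversely a clearing strategy
keeps the robbers inside the contaminated set. Fewer robbers can only help the cops.
-/

section

variable {V : Type*} {E : V → V → Prop}

theorem Set.ncard_le_fintype_card [Fintype V] (s : Set V) : s.ncard ≤ Fintype.card V :=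
  Nat.card_eq_fintype_card (α := V) ▸ s.ncard_le_card

theorem reachAvoid_subset_of_closed_s10 {U U' R : Set V} {x : V}
    (hclosed : ∀ a ∈ R, ∀ b, E a b → b ∈ R ∪ U)
    (hmon : ∀ u ∈ U \ U', u ∉ reachAvoid E (U ∩ U') x) (hx : x ∈ R) :
    reachAvoid E (U ∩ U') x ⊆ R := by
  intro w hw
  induction hw with
  | refl => exact hx
  | tail hxb hbc ih =>
    refine (hclosed _ ih _ hbc.1).resolve_right fun hcU => ?_
    exact hmon _ ⟨hcU, fun hcU' => hbc.2 ⟨hcU, hcU'⟩⟩ (hxb.tail hbc)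

namespace MonCopsWinMulti

theorem of_le_robbers {k r r' : ℕ} (hr : r ≤ r') {U R : Set V}
    (h : MonCopsWinMulti E k r' U R) : MonCopsWinMulti E k r U R := by
  induction h with
  | captured U => exact .captured U
  | step U R U' hfin hcard hmon _ ih =>
    exact .step U R U' hfin hcard hmon fun R' hf hc => ih R' hf (hc.trans hr)

theorem subset {k r : ℕ} {U R S : Set V} (h : MonCopsWinMulti E k r U R) (hS : S ⊆ R) :
    MonCopsWinMulti E k r U S := by
  induction h generalizing S with
  | captured U => exact Set.subset_empty_iff.mp hS ▸ .captured U
  | step U R U' hfin hcard hmon h _ =>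
    refine .step U S U' hfin hcard (fun u hu x hx => hmon u hu x (hS hx)) ?_
    exact fun R' hf hc hR'U' hreach =>
      h R' hf hc hR'U' fun y hy => (hreach y hy).imp fun _ hx => ⟨hS hx.1, hx.2⟩

theorem of_card_le [Fintype V] {k r : ℕ} (hk : Fintype.card V ≤ k) (U R : Set V) :
    MonCopsWinMulti E k r U R := by
  refine .step U R Set.univ Set.finite_univ
    (by rwa [Set.ncard_univ, Nat.card_eq_fintype_card]) (by simp) ?_
  intro R' _ _ hR' _
  rw [Set.inter_univ] at hR'
  exact hR' ▸ .captured _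

theorem toMonCopsWin {k : ℕ} {U R : Set V} (h : MonCopsWinMulti E k 1 U R) {v : V}
    (hv : v ∈ R) : MonCopsWin E k U v := by
  induction h generalizing v with
  | captured U => exact absurd hv (Set.notMem_empty v)
  | step U R U' hfin hcard hmon _ ih =>
    refine .step U v U' hfin hcard (fun u hu => hmon u hu v hv) fun v' hv' hv'U' => ?_
    refine ih {v'} (Set.finite_singleton v') (Set.ncard_singleton v').le ?_ ?_ rfl
    · exact Set.singleton_inter_eq_empty.mpr hv'U'
    · exact fun y hy => ⟨v, hv, hy ▸ hv'⟩

theorem toInvClear [Fintype V] {k : ℕ} {U R : Set V}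
    (h : MonCopsWinMulti E k (Fintype.card V) U R)
    (hclosed : ∀ a ∈ R, ∀ b, E a b → b ∈ R ∪ U) : InvClear E k U R := by
  induction h with
  | captured U => exact .empty U
  | step U R U' hfin hcard hmon _ ih =>
    have hreach : {w | ∃ x ∈ R, w ∈ reachAvoid E (U ∩ U') x} ⊆ R := by
      rintro w ⟨x, hx, hw⟩
      exact reachAvoid_subset_of_closed_s10 hclosed (fun u hu => hmon u hu x hx) hx hw
    refine .step U R U' hfin hcard (fun w hw => hreach hw.1) (ih _ (Set.toFinite _)
      (Set.ncard_le_fintype_card _) Set.sdiff_inter_self (fun y hy => hy.1) ?_)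
    rintro a ⟨⟨x, hx, hxa⟩, -⟩ b hab
    by_cases hb : b ∈ U'
    · exact Or.inr hb
    · exact Or.inl ⟨⟨x, hx, hxa.tail ⟨hab, fun hbU => hb hbU.2⟩⟩, hb⟩

end MonCopsWinMulti

theorem MonCopsWin.toMonCopsWinMulti {k : ℕ} {U : Set V} {v : V} (h : MonCopsWin E k U v) :
    MonCopsWinMulti E k 1 U {v} := by
  induction h with
  | step U v U' hfin hcard hmon _ ih =>
    refine .step U {v} U' hfin hcard (fun u hu x hx => hx ▸ hmon u hu) ?_
    intro R' hf hc hR'U' hreach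
    obtain rfl | ⟨y, rfl⟩ := (Set.ncard_le_one_iff_eq hf).mp hc
    · exact .captured _
    · obtain ⟨_, rfl, hy⟩ := hreach y rfl
      exact ih y hy (Set.singleton_inter_eq_empty.mp hR'U')

theorem InvClear.toMonCopsWinMulti [Fintype V] {k : ℕ} {U R : Set V} (h : InvClear E k U R)
    (hRU : Disjoint R U) : MonCopsWinMulti E k (Fintype.card V) U R := by
  induction h with
  | empty U => exact .captured U
  | step U R U' hfin hcard hmon _ ih =>
    refine .step U R U' hfin hcard ?_ fun R' _ _ hR'U' hreach => ?_
    · exact fun u hu x hx hxu => hRU.notMem_of_mem_left (hmon ⟨⟨x, hx, hxu⟩, hu.2⟩) hu.1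
    · refine (ih Set.disjoint_sdiff_left).subset fun y hy => ⟨hreach y hy, fun hyU' => ?_⟩
      exact (Set.eq_empty_iff_forall_notMem.mp hR'U') y ⟨hy, hyU'⟩

theorem dwr_mono [Fintype V] : Monotone (dwr E) := by
  intro r r' hr
  have hne : {k | ∀ R : Set V, R.Finite → R.ncard ≤ r' → MonCopsWinMulti E k r' ∅ R}.Nonempty :=
    ⟨Fintype.card V, fun R _ _ => .of_card_le le_rfl ∅ R⟩
  exact Nat.sInf_le fun R hf hc => (Nat.sInf_mem hne R hf (hc.trans hr)).of_le_robbers hr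

theorem dwr_one : dwr E 1 = dagWidth E := by
  refine congrArg sInf (Set.ext fun k => ⟨fun hk v => ?_, fun hk R hf hc => ?_⟩)
  · exact (hk {v} (Set.finite_singleton v) (Set.ncard_singleton v).le).toMonCopsWin rfl
  · obtain rfl | ⟨v, rfl⟩ := (Set.ncard_le_one_iff_eq hf).mp hc
    · exact .captured ∅
    · exact (hk v).toMonCopsWinMulti

theorem dwr_card [Fintype V] : dwr E (Fintype.card V) = dpwPlusOne E := by
  refine congrArg sInf (Set.ext fun k => ⟨fun hk => ?_, fun hk R _ _ => ?_⟩)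
  · exact (hk Set.univ Set.finite_univ (Set.ncard_le_fintype_card _)).toInvClear (by simp)
  · exact (hk.toMonCopsWinMulti (Set.disjoint_empty _)).subset (Set.subset_univ R)

end

/-- **The robbers hierarchy:** for a directed graph `G` on `n` vertices, the cop
numbers `dw_r(G)` are monotonically non-decreasing in `r`, with `dw_1(G)` equal
to the DAG-width of `G` and `dw_n(G)` equal to the directed path-width of `G`
plus `1`. -/
theorem dwr_hierarchy {V : Type*} [Fintype V] (E : V → V → Prop) :
    (∀ r r' : ℕ, r ≤ r' → dwr E r ≤ dwr E r') ∧
    dwr E 1 = dagWidth E ∧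
    dwr E (Fintype.card V) = dpwPlusOne E :=
  ⟨fun _ _ hr => dwr_mono hr, dwr_one, dwr_card⟩
end

section
/- On the full undirected tree of branching degree d ≥ 3 and sufficient height, i robbers who can jump to each other win the multiple-robbers game against ⌊i/2⌋ cops, provided the cops play top-down (never leaving a vertex v unoccupied while placing cops in the subtree below v when v is reachable from a robber): the robbers can maintain that every placed cop is tied, i.e., reachable from some robber by a cop-free path. -/
/-- Vertices of the complete tree of branching degree `d` and height `h + 1`:
sequences over `Fin d` of length at most `h` (the root is the empty sequence). -/
def TreeV (d h : ℕ) := {l : List (Fin d) // l.length ≤ h}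

/-- The (undirected) edge relation of the complete tree: parent–child edges in
both directions. -/
def treeE (d h : ℕ) : TreeV d h → TreeV d h → Prop :=
  fun x y => (∃ i : Fin d, y.1 = x.1 ++ [i]) ∨ (∃ i : Fin d, x.1 = y.1 ++ [i])

/-- `v` is a proper ancestor of `u` in the tree. -/
def ProperAncestor {d h : ℕ} (v u : TreeV d h) : Prop :=
  v.1 <+: u.1 ∧ v.1 ≠ u.1

/-- Monotone win of `k` cops against (at most) `r` jumping robbers on the tree,
where the cops are moreover required to play *top-down*: they never leave a
vertex `v` unoccupied while placing a new cop in the subtree below `v` when `v`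
is reachable from a robber. -/
inductive TopDownCopsWin (d h : ℕ) (k r : ℕ) :
    Set (TreeV d h) → Set (TreeV d h) → Prop
  | captured (U : Set (TreeV d h)) : TopDownCopsWin d h k r U ∅
  | step (U R U' : Set (TreeV d h)) (hfin : U'.Finite) (hcard : U'.ncard ≤ k)
      (hmon : ∀ u ∈ U \ U', ∀ x ∈ R, u ∉ reachAvoid (treeE d h) (U ∩ U') x)
      (htopdown : ∀ v, v ∉ U' → (∃ u ∈ U' \ U, ProperAncestor v u) →
          ∀ x ∈ R, v ∉ reachAvoid (treeE d h) (U ∩ U') x)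
      (hrec : ∀ R' : Set (TreeV d h), R'.Finite → R'.ncard ≤ r → R' ∩ U' = ∅ →
            (∀ y ∈ R', ∃ x ∈ R, y ∈ reachAvoid (treeE d h) (U ∩ U') x) →
            TopDownCopsWin d h k r U' R') :
      TopDownCopsWin d h k r U R

/-!
The robbers keep each robber on a *hideout*: a vertex whose subtree is cop-free and which is the
root or one of two fixed children of a cop. A cop adjacent to a robber cannot be lifted
(monotonicity), so a hideout stays one until a cop enters its subtree. Top-down play then forces
the whole path from the robber down to the deepest new cop `s` to be occupied, and the robber
splits into the two fixed children of `s`, whose subtrees are cop-free. Every robber hangs below a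
cop and each cop carries at most two robbers, so there are never more than `2k ≤ i` of them; a
split sinks a robber by at most `k` levels and increases the number of robbers, so no robber ever
gets deeper than `k * i`.
-/

namespace TreeV

variable {d h : ℕ}

def SubtreeFree (U : Set (TreeV d h)) (x : TreeV d h) : Prop :=
  ∀ y : TreeV d h, x.1 <+: y.1 → y ∉ U

def Hideout (J : Finset (Fin d)) (U : Set (TreeV d h)) (x : TreeV d h) : Prop :=
  SubtreeFree U x ∧ (x.1 = [] ∨ ∃ p ∈ U, ∃ j ∈ J, x.1 = p.1 ++ [j])

def root (d h : ℕ) : TreeV d h := ⟨[], Nat.zero_le h⟩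

def child (s : TreeV d h) (hs : s.1.length < h) (j : Fin d) : TreeV d h :=
  ⟨s.1 ++ [j], by simpa using hs⟩

lemma child_injective (s : TreeV d h) (hs : s.1.length < h) : Function.Injective (child s hs) :=
  fun _ _ hij => by simpa [child] using congrArg Subtype.val hij

lemma SubtreeFree.mono {U V : Set (TreeV d h)} {x : TreeV d h} (hx : SubtreeFree U x)
    (hVU : V ⊆ U) : SubtreeFree V x :=
  fun y hxy hy => hx y hxy (hVU hy)

lemma mem_reachAvoid_of_prefix {X : Set (TreeV d h)} {x w : TreeV d h} (hx : SubtreeFree X x)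
    (hxw : x.1 <+: w.1) : w ∈ reachAvoid (treeE d h) X x := by
  obtain ⟨t, ht⟩ := hxw
  induction t using List.reverseRecOn generalizing w with
  | nil => exact (Subtype.ext (by simpa using ht) : x = w) ▸ Relation.ReflTransGen.refl
  | append_singleton t j ih =>
    have hlen : (x.1 ++ t).length ≤ h := by
      have := w.2
      rw [← ht] at this
      simp only [List.length_append, List.length_singleton] at this ⊢
      omega
    refine (ih (w := ⟨x.1 ++ t, hlen⟩) rfl).tail ⟨Or.inl ⟨j, ?_⟩, hx w ⟨t ++ [j], ht⟩⟩
    simp [← ht]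

lemma mem_reachAvoid_of_parent {X : Set (TreeV d h)} {p x : TreeV d h} {j : Fin d}
    (hxp : x.1 = p.1 ++ [j]) (hp : p ∉ X) : p ∈ reachAvoid (treeE d h) X x :=
  Relation.ReflTransGen.single ⟨Or.inr ⟨j, hxp⟩, hp⟩

lemma length_add_one_le_of_forall_prefix_mem {U : Set (TreeV d h)} (hU : U.Finite)
    {x s : TreeV d h} (hxs : x.1 <+: s.1)
    (hmem : ∀ v : TreeV d h, x.1 <+: v.1 → v.1 <+: s.1 → v ∈ U) :
    s.1.length + 1 ≤ x.1.length + U.ncard := by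
  let anc : ℕ → TreeV d h := fun m => ⟨s.1.take m, (List.length_take_le' _ _).trans s.2⟩
  have hmaps : Set.MapsTo anc ↑(Finset.Icc x.1.length s.1.length) ↑hU.toFinset := by
    intro m hm
    rw [Finset.coe_Icc, Set.mem_Icc] at hm
    refine hU.mem_toFinset.2 (hmem _ ?_ (List.take_prefix m s.1))
    exact List.prefix_of_prefix_length_le hxs (List.take_prefix m s.1)
      (by rw [List.length_take]; omega)
  have hinj : Set.InjOn anc ↑(Finset.Icc x.1.length s.1.length) := by
    intro a ha b hb hab
    rw [Finset.coe_Icc, Set.mem_Icc] at ha hb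
    have := congrArg (fun v : TreeV d h => v.1.length) hab
    simp only [anc, List.length_take] at this
    omega
  have := Finset.card_le_card_of_injOn anc hmaps hinj
  rw [Nat.card_Icc, ← Set.ncard_eq_toFinset_card U hU] at this
  have := hxs.length_le
  omega

lemma exists_deepest_cop_below {k : ℕ} {U U' : Set (TreeV d h)} {x : TreeV d h}
    (hfin : U'.Finite) (hcard : U'.ncard ≤ k) (hx : SubtreeFree U x)
    (htop : ∀ v, v ∉ U' → (∃ u ∈ U' \ U, ProperAncestor v u) →
      v ∉ reachAvoid (treeE d h) (U ∩ U') x)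
    (hinv : ∃ t ∈ U', x.1 <+: t.1) :
    ∃ s ∈ U', x.1 <+: s.1 ∧ s.1.length + 1 ≤ x.1.length + k ∧
      ∀ z ∈ U', s.1 <+: z.1 → z = s := by
  obtain ⟨s, ⟨hsU', hxs⟩, hsmax⟩ := Set.exists_max_image {t | t ∈ U' ∧ x.1 <+: t.1}
    (fun t => t.1.length) (hfin.subset fun _ ht => ht.1) hinv
  have hpath : ∀ v : TreeV d h, x.1 <+: v.1 → v.1 <+: s.1 → v ∈ U' := by
    intro v hxv hvs
    by_cases hvs' : v.1 = s.1
    · exact (Subtype.ext hvs' : v = s) ▸ hsU'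
    by_contra hvU'
    exact htop v hvU' ⟨s, ⟨hsU', hx s hxs⟩, hvs, hvs'⟩
      (mem_reachAvoid_of_prefix (hx.mono Set.inter_subset_left) hxv)
  refine ⟨s, hsU', hxs, ?_, fun z hzU' hsz => ?_⟩
  · exact (length_add_one_le_of_forall_prefix_mem hfin hxs hpath).trans (by omega)
  · exact Subtype.ext (hsz.eq_of_length (le_antisymm hsz.length_le
      (hsmax z ⟨hzU', hxs.trans hsz⟩))).symm

section Hideout

variable {J : Finset (Fin d)} {U : Set (TreeV d h)}

lemma Hideout.eq_of_prefix {x z : TreeV d h} (hx : Hideout J U x) (hz : Hideout J U z)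
    (hxz : x.1 <+: z.1) : x = z := by
  rcases hz.2 with hz0 | ⟨p, hpU, j, -, hzp⟩
  · exact Subtype.ext (by rw [hz0] at hxz ⊢; exact List.prefix_nil.1 hxz)
  by_contra hne
  have hlen : x.1.length ≠ z.1.length := fun he => hne (Subtype.ext (hxz.eq_of_length he))
  have hzlen : z.1.length = p.1.length + 1 := by
    rw [hzp, List.length_append, List.length_singleton]
  have hxp : x.1 <+: p.1 := List.prefix_of_prefix_length_le hxz ⟨[j], hzp.symm⟩
    (by have := hxz.length_le; omega)
  exact hx.1 p hxp hpU

lemma Hideout.eq_of_prefix_of_prefix {x z : TreeV d h} {l : List (Fin d)}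
    (hx : Hideout J U x) (hz : Hideout J U z) (hxl : x.1 <+: l) (hzl : z.1 <+: l) : x = z := by
  rcases List.prefix_or_prefix_of_prefix hxl hzl with hxz | hzx
  · exact hx.eq_of_prefix hz hxz
  · exact (hz.eq_of_prefix hx hzx).symm

lemma card_le_card_mul_ncard_of_forall_child (hU : U.Finite) {S : Finset (TreeV d h)}
    (hS : ∀ x ∈ S, ∃ p ∈ U, ∃ j ∈ J, x.1 = p.1 ++ [j]) :
    S.card ≤ J.card * U.ncard := by
  classical
  have hsurj : Set.SurjOn (fun pj : TreeV d h × Fin d => pj.1.1 ++ [pj.2])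
      ↑(hU.toFinset ×ˢ J) ↑(S.image Subtype.val) := by
    intro l hl
    obtain ⟨x, hxS, rfl⟩ := Finset.mem_image.1 hl
    obtain ⟨p, hpU, j, hj, hxp⟩ := hS x hxS
    exact ⟨(p, j), Finset.mem_product.2 ⟨hU.mem_toFinset.2 hpU, hj⟩, hxp.symm⟩
  have hcard : (S.image Subtype.val).card = S.card :=
    Finset.card_image_of_injective S Subtype.val_injective
  have := Finset.card_le_card_of_surjOn _ hsurj
  rwa [hcard, Finset.card_product, ← Set.ncard_eq_toFinset_card U hU, mul_comm] at this

lemma card_le_of_forall_hideout (hU : U.Finite) {S : Finset (TreeV d h)}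
    (hS : ∀ x ∈ S, Hideout J U x) : S.card ≤ 1 ∨ S.card ≤ J.card * U.ncard := by
  by_cases hroot : ∃ x ∈ S, x.1 = []
  · obtain ⟨x, hxS, hx⟩ := hroot
    refine Or.inl (Finset.card_le_one.2 fun a ha b hb => ?_)
    have hxa := (hS x hxS).eq_of_prefix (hS a ha) (hx ▸ List.nil_prefix)
    have hxb := (hS x hxS).eq_of_prefix (hS b hb) (hx ▸ List.nil_prefix)
    rw [← hxa, ← hxb]
  · push Not at hroot
    exact Or.inr (card_le_card_mul_ncard_of_forall_child hU fun x hx =>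
      (hS x hx).2.resolve_left (hroot x hx))

lemma exists_hideouts_below {k : ℕ} {U' : Set (TreeV d h)} {x : TreeV d h} (hJ : 2 ≤ J.card)
    (hfin : U'.Finite) (hcard : U'.ncard ≤ k) (hx : Hideout J U x) (hroom : x.1.length + k ≤ h)
    (hmon : ∀ u ∈ U \ U', u ∉ reachAvoid (treeE d h) (U ∩ U') x)
    (htop : ∀ v, v ∉ U' → (∃ u ∈ U' \ U, ProperAncestor v u) →
      v ∉ reachAvoid (treeE d h) (U ∩ U') x) :
    ∃ T : Finset (TreeV d h), T.Nonempty ∧ ∀ y ∈ T,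
      x.1 <+: y.1 ∧ y.1.length + k ≤ x.1.length + k * T.card ∧ Hideout J U' y := by
  classical
  by_cases hinv : ∃ t ∈ U', x.1 <+: t.1
  · obtain ⟨s, hsU', hxs, hslen, hsmax⟩ := exists_deepest_cop_below hfin hcard hx.1 htop hinv
    have hs : s.1.length < h := by omega
    have hTcard : (J.image (child s hs)).card = J.card :=
      Finset.card_image_of_injective J (child_injective s hs)
    refine ⟨J.image (child s hs), Finset.card_pos.1 (by omega), ?_⟩
    rintro _ hy
    obtain ⟨j, hj, rfl⟩ := Finset.mem_image.1 hy
    have hlen : (child s hs j).1.length = s.1.length + 1 := by simp [child]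
    refine ⟨hxs.trans (List.prefix_append _ _), ?_, ?_, Or.inr ⟨s, hsU', j, hj, rfl⟩⟩
    · have := Nat.mul_le_mul_left k hJ
      rw [hTcard, hlen]
      omega
    · intro z hz hzU'
      obtain rfl := hsmax z hzU' ((List.prefix_append _ _).trans hz)
      have := hz.length_le
      omega
  · push Not at hinv
    refine ⟨{x}, Finset.singleton_nonempty x, ?_⟩
    simp only [Finset.mem_singleton, forall_eq, Finset.card_singleton, mul_one]
    refine ⟨List.prefix_refl _, le_rfl, fun y hxy hy => hinv y hy hxy, ?_⟩
    rcases hx.2 with hx0 | ⟨p, hpU, j, hj, hxp⟩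
    · exact Or.inl hx0
    · refine Or.inr ⟨p, ?_, j, hj, hxp⟩
      by_contra hpU'
      exact hmon p ⟨hpU, hpU'⟩ (mem_reachAvoid_of_parent hxp fun hp => hpU' hp.2)

end Hideout

structure Safe (J : Finset (Fin d)) (k r : ℕ) (U : Set (TreeV d h)) (S : Finset (TreeV d h)) :
    Prop where
  nonempty : S.Nonempty
  card_le : S.card ≤ r
  hideout : ∀ x ∈ S, Hideout J U x
  length_add_le : ∀ x ∈ S, x.1.length + k ≤ k * S.card

lemma safe_root (J : Finset (Fin d)) (k : ℕ) {r : ℕ} (hr : 1 ≤ r) :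
    Safe J k r ∅ {root d h} where
  nonempty := Finset.singleton_nonempty _
  card_le := hr
  hideout x hx := by
    rw [Finset.mem_singleton.1 hx]
    exact ⟨fun _ _ hy => hy, Or.inl rfl⟩
  length_add_le x hx := by
    rw [Finset.mem_singleton.1 hx, Finset.card_singleton]
    simp [root]

variable {J : Finset (Fin d)} {k r : ℕ} {U U' : Set (TreeV d h)} {S : Finset (TreeV d h)}

lemma Safe.exists_next (hJ : 2 ≤ J.card) (hJr : J.card * k ≤ r) (hh : k * r ≤ h)
    (hS : Safe J k r U S) (hfin : U'.Finite) (hcard : U'.ncard ≤ k)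
    (hmon : ∀ u ∈ U \ U', ∀ x ∈ (S : Set (TreeV d h)), u ∉ reachAvoid (treeE d h) (U ∩ U') x)
    (htop : ∀ v, v ∉ U' → (∃ u ∈ U' \ U, ProperAncestor v u) →
      ∀ x ∈ (S : Set (TreeV d h)), v ∉ reachAvoid (treeE d h) (U ∩ U') x) :
    ∃ S' : Finset (TreeV d h), Safe J k r U' S' ∧ (S' : Set (TreeV d h)) ∩ U' = ∅ ∧
      ∀ y ∈ (S' : Set (TreeV d h)), ∃ x ∈ (S : Set (TreeV d h)),
        y ∈ reachAvoid (treeE d h) (U ∩ U') x := by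
  classical
  have hroom : ∀ x ∈ S, x.1.length + k ≤ h := fun x hx =>
    (hS.length_add_le x hx).trans ((Nat.mul_le_mul_left k hS.card_le).trans hh)
  choose! T hTne hT using fun x (hx : x ∈ S) => exists_hideouts_below hJ hfin hcard
    (hS.hideout x hx) (hroom x hx) (fun u hu => hmon u hu x hx) (fun v hv hu => htop v hv hu x hx)
  have hdisj : (S : Set (TreeV d h)).PairwiseDisjoint T := by
    intro x hx x' hx' hne
    refine Finset.disjoint_left.2 fun y hyx hyx' => hne ?_
    exact (hS.hideout x hx).eq_of_prefix_of_prefix (hS.hideout x' hx') (hT x hx y hyx).1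
      (hT x' hx' y hyx').1
  have hhide : ∀ y ∈ S.biUnion T, Hideout J U' y := by
    intro y hy
    obtain ⟨x, hx, hyx⟩ := Finset.mem_biUnion.1 hy
    exact (hT x hx y hyx).2.2
  have hcard' : (S.biUnion T).card = ∑ x ∈ S, (T x).card := Finset.card_biUnion hdisj
  refine ⟨S.biUnion T, ⟨hS.nonempty.biUnion hTne, ?_, hhide, ?_⟩, ?_, ?_⟩
  · rcases card_le_of_forall_hideout hfin hhide with h1 | h2
    · exact h1.trans ((Finset.one_le_card.2 hS.nonempty).trans hS.card_le)
    · exact h2.trans ((Nat.mul_le_mul_left J.card hcard).trans hJr)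
  · intro y hy
    obtain ⟨x, hx, hyx⟩ := Finset.mem_biUnion.1 hy
    have hy := (hT x hx y hyx).2.1
    have hx' := hS.length_add_le x hx
    have hothers : (S.erase x).card ≤ ∑ z ∈ S.erase x, (T z).card := by
      simpa using Finset.card_nsmul_le_sum (S.erase x) (fun z => (T z).card) 1
        fun z hz => Finset.card_pos.2 (hTne z (Finset.mem_of_mem_erase hz))
    have hsum := Finset.add_sum_erase S (fun z => (T z).card) hx
    rw [← Finset.card_erase_add_one hx, mul_add, mul_one] at hx'
    have := Nat.mul_le_mul_left k hothers
    rw [hcard', ← hsum, mul_add]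
    omega
  · refine Set.eq_empty_iff_forall_notMem.2 fun y ⟨hyS', hyU'⟩ => ?_
    exact (hhide y hyS').1 y (List.prefix_refl _) hyU'
  · intro y hy
    obtain ⟨x, hx, hyx⟩ := Finset.mem_biUnion.1 hy
    exact ⟨x, hx, mem_reachAvoid_of_prefix ((hS.hideout x hx).1.mono Set.inter_subset_left)
      (hT x hx y hyx).1⟩

theorem not_topDownCopsWin_of_safe (hJ : 2 ≤ J.card) (hJr : J.card * k ≤ r) (hh : k * r ≤ h)
    {R : Set (TreeV d h)} (hwin : TopDownCopsWin d h k r U R) (hRS : R = S)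
    (hS : Safe J k r U S) : False := by
  induction hwin generalizing S with
  | captured U => exact hS.nonempty.ne_empty (Finset.coe_eq_empty.1 hRS.symm)
  | step U R U' hfin hcard hmon htop _ ih =>
    subst hRS
    obtain ⟨S', hS', hdisj, hreach⟩ := hS.exists_next hJ hJr hh hfin hcard hmon htop
    exact ih S' S'.finite_toSet (by rw [Set.ncard_coe_finset]; exact hS'.card_le) hdisj hreach
      rfl hS'

end TreeV

/-- **Robbers beat top-down cops on trees:** on the full undirected tree of
branching degree `d ≥ 3` and sufficient height, `i ≥ 1` robbers (who can jump
to each other) win the multiple-robbers game against `⌊i/2⌋` cops playing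
top-down: for some initial robber placement the top-down cops have no monotone
winning strategy. -/
theorem robbers_beat_topdown_cops (d i : ℕ) (hd : 3 ≤ d) (hi : 1 ≤ i) :
    ∃ h0 : ℕ, ∀ h : ℕ, h0 ≤ h →
      ∃ R0 : Set (TreeV d h), R0.Finite ∧ R0.ncard ≤ i ∧
        ¬ TopDownCopsWin d h (i / 2) i ∅ R0 := by
  let J : Finset (Fin d) := Finset.univ.map (Fin.castLEEmb (by omega : 2 ≤ d))
  have hJ : J.card = 2 := by simp [J]
  refine ⟨i / 2 * i, fun h hh =>
    ⟨{TreeV.root d h}, Set.finite_singleton _, by simpa using hi, fun hwin => ?_⟩⟩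
  exact TreeV.not_topDownCopsWin_of_safe hJ.ge (by rw [hJ]; omega) hh hwin
    (Finset.coe_singleton _).symm (TreeV.safe_root J (i / 2) hi)
end

section
/- In the cops-and-robber game characterizing DAG-width played against an isolating prudent team of robbers, the following holds for the combined strategy ⊗_r f built from a monotone active winning strategy f for k cops: in every reachable cop position with memory histories ρ₁ ⊏ … ⊏ ρ_s satisfying invariants (Cons), (Lin), (Omit), (Ext), for every i ≤ s−1 one has Reach_{G−U^i}(R_i) ⊆ O^i, where U^i = ⋃_{j≤i} U_j, O^i = ⋃_{j≤i} O_j, and U_j = W_j \ O^{j−1}. -/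
section ReachAvoid

variable {V : Type*} {E : V → V → Prop}

theorem reachAvoid_subset_of_closed_s15 {X T : Set V}
    (hT : ∀ ⦃a b⦄, a ∈ T → E a b → b ∉ X → b ∈ T) {x : V} (hx : x ∈ T) :
    reachAvoid E X x ⊆ T := by
  intro w hw
  induction hw with
  | refl => exact hx
  | tail _ hstep ih => exact hT ih hstep.1 hstep.2

theorem mem_of_adj_of_eq_reachAvoid {W O : Set V}
    (hO : O = {v | ∃ x ∈ O, v ∈ reachAvoid E W x}) {a b : V}
    (ha : a ∈ O) (hab : E a b) (hb : b ∉ W) : b ∈ O := by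
  rw [hO]
  exact ⟨a, ha, .single ⟨hab, hb⟩⟩

theorem mem_iUnion_le_of_adj {ι : Type*} [Preorder ι] {W O : ι → Set V}
    (hOmit : ∀ j, O j = {v | ∃ x ∈ O j, v ∈ reachAvoid E (W j) x}) {i : ι} {a b : V}
    (ha : a ∈ ⋃ j ≤ i, O j) (hab : E a b) (hb : b ∉ ⋃ j ≤ i, (W j \ ⋃ l < j, O l)) :
    b ∈ ⋃ j ≤ i, O j := by
  obtain ⟨l, hli, hal⟩ := Set.mem_iUnion₂.1 ha
  by_cases hbW : b ∈ W l
  · have hb_earlier : b ∈ ⋃ l' < l, O l' := by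
      by_contra h
      exact hb (Set.mem_iUnion₂.2 ⟨l, hli, hbW, h⟩)
    obtain ⟨l', hl'l, hbl'⟩ := Set.mem_iUnion₂.1 hb_earlier
    exact Set.mem_iUnion₂.2 ⟨l', hl'l.le.trans hli, hbl'⟩
  · exact Set.mem_iUnion₂.2 ⟨l, hli, mem_of_adj_of_eq_reachAvoid (hOmit l) hal hab hbW⟩

end ReachAvoid

/-- **Lemma `lemma_le`:** in the combined strategy `⊗_r f` for the
multiple-robbers game, consider the memory data of the histories
`ρ₁ ⊏ … ⊏ ρ_s`: last cop placements `Wᵢ`, associated robber sets `Rᵢ` and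
omitted sets `Oᵢ` (for `i ≤ s − 1`, here indexed by `Fin m`), satisfying the
invariant (Omit): `Rᵢ ⊆ Oᵢ = Reach_{G−Wᵢ}(Oᵢ)`.  With `Uⱼ = Wⱼ \ O^{j−1}`,
`U^i = ⋃_{j≤i} Uⱼ` and `O^i = ⋃_{j≤i} Oⱼ`, one has, for every `i ≤ s − 1`,
`Reach_{G−U^i}(Rᵢ) ⊆ O^i`. -/
theorem reach_subset_omitted {V : Type*} (E : V → V → Prop) (m : ℕ)
    (W R O : Fin m → Set V)
    (hRsubO : ∀ i, R i ⊆ O i)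
    (hOmit : ∀ i, O i = {v | ∃ x ∈ O i, v ∈ reachAvoid E (W i) x}) :
    ∀ i : Fin m,
      {v | ∃ x ∈ R i,
          v ∈ reachAvoid E
            (⋃ (j : Fin m) (_ : j ≤ i), (W j \ ⋃ (l : Fin m) (_ : l < j), O l)) x}
        ⊆ ⋃ (j : Fin m) (_ : j ≤ i), O j := by
  rintro i v ⟨x, hx, hv⟩
  exact reachAvoid_subset_of_closed_s15 (fun _ _ => mem_iUnion_le_of_adj hOmit)
    (Set.mem_iUnion₂.2 ⟨i, le_rfl, hRsubO i hx⟩) hv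
end

section
/- If π̄ is an infinite play of the cops-and-robber game on the powerset graph Ḡ consistent with the translated strategy, and each finite prefix π̄ᵢ is associated (via the translation) with a finitely-branching tree ζ(π̄ᵢ) of f-consistent histories of the game on G extending one another, then by König's Lemma there is an infinite play on G consistent with f — contradicting that f is winning. Hence the translated strategy on Ḡ admits no infinite consistent play. -/
/-!
The levels `S n` form an inverse system of nonempty finite sets under truncation of tuples, so
Kőnig's lemma yields one infinite sequence all of whose prefixes lie in the tree. Consecutive
prefixes are `f`-consistent histories, so the sequence is an infinite play consistent with `f`,
which a winning strategy does not admit.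
-/

section Koenig

variable {α : Type*} {S : ∀ n : ℕ, Set (Fin (n + 1) → α)}

theorem take_mem_of_forall_init_mem (hinit : ∀ n, ∀ b ∈ S (n + 1), Fin.init b ∈ S n)
    {n m : ℕ} (hnm : n ≤ m) {b : Fin (m + 1) → α} (hb : b ∈ S m) :
    Fin.take (n + 1) (Nat.succ_le_succ hnm) b ∈ S n := by
  induction m, hnm using Nat.le_induction with
  | base => simpa only [Fin.take_eq_self] using hb
  | succ m hnm ih => exact ih (hinit m b hb)

theorem exists_seq_forall_mem_of_forall_init_mem (hne : ∀ n, (S n).Nonempty)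
    (hfin : ∀ n, (S n).Finite) (hinit : ∀ n, ∀ b ∈ S (n + 1), Fin.init b ∈ S n) :
    ∃ g : ℕ → α, ∀ n, (fun i : Fin (n + 1) => g i) ∈ S n := by
  have := fun n => (hfin n).to_subtype
  have := fun n => (hne n).to_subtype
  obtain ⟨F, hF⟩ := exists_seq_forall_proj_of_forall_finite (α := fun n => S n)
    (fun hnm b => ⟨_, take_mem_of_forall_init_mem hinit hnm b.2⟩)
    (fun _ b => Subtype.ext (Fin.take_eq_self b.1)) (fun _ _ _ _ _ _ => rfl)
    (fun n _ => Set.toFinite _)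
  refine ⟨fun n => (F n).1 (Fin.last n), fun n => ?_⟩
  convert (F n).2 using 1
  funext i
  exact (congrArg (fun b => b.1 (Fin.last i)) (hF (Nat.lt_succ_iff.mp i.2))).symm

end Koenig

theorem koenig_no_infinite_play_general {V : Type*} (E : V → V → Prop)
    (f : Set V → V → Set V) (hwin : StratWinning E f)
    (S : ∀ n : ℕ, Set (Fin (n + 1) → Set V × V))
    (hne : ∀ n, (S n).Nonempty)
    (hfin : ∀ n, (S n).Finite)
    (hcons : ∀ n, ∀ b ∈ S n, (b 0).1 = ∅ ∧
        ∀ i : Fin n, copStep E f (b i.castSucc) (b i.succ))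
    (hcoh : ∀ n, ∀ b ∈ S (n + 1), (fun i : Fin (n + 1) => b i.castSucc) ∈ S n) :
    False := by
  obtain ⟨p, hp⟩ := exists_seq_forall_mem_of_forall_init_mem hne hfin hcoh
  refine hwin ⟨p, (hcons 0 _ (hp 0)).1, fun n => ?_⟩
  simpa using (hcons (n + 1) _ (hp (n + 1))).2 (Fin.last n)

/-- **König's Lemma step in the translation to the powerset graph.**
Suppose `f` is a winning cop strategy on `G` and `π̄` is an infinite play of the
cops-and-robber game on the powerset graph `Ḡ` consistent with the translated
strategy, whose finite prefixes are associated with a coherent family of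
finitely-branching trees of `f`-consistent histories on `G`: for each `n`,
`S n` is the nonempty finite set of branches of length `n` (at most `r` per
level), each branch is an `f`-consistent history starting with an empty cop set,
and each branch of `S (n+1)` extends a branch of `S n`.  Then, by König's Lemma,
there is an infinite `f`-consistent play — a contradiction.  Hence the
translated strategy on `Ḡ` admits no such infinite consistent play. -/
theorem koenig_no_infinite_play {V : Type*} (E : V → V → Prop)
    (f : Set V → V → Set V) (hwin : StratWinning E f) (r : ℕ)
    (pibar : ℕ → Set V × Set V)
    (S : ∀ n : ℕ, Set (Fin (n + 1) → Set V × V))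
    (hne : ∀ n, (S n).Nonempty)
    (hfin : ∀ n, (S n).Finite)
    (hbranch : ∀ n, (S n).ncard ≤ r)
    (hcons : ∀ n, ∀ b ∈ S n, (b 0).1 = ∅ ∧
        ∀ i : Fin n, copStep E f (b i.castSucc) (b i.succ))
    (hcoh : ∀ n, ∀ b ∈ S (n + 1), (fun i : Fin (n + 1) => b i.castSucc) ∈ S n)
    (hlevels : ∀ n, ∀ b ∈ S n, (b (Fin.last n)).2 ∈ (pibar n).2) :
    False :=
  koenig_no_infinite_play_general E f hwin S hne hfin hcons hcoh
end
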